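/- arXiv:math/0309360 — 2 statements merged into one kernel-verified Lean document; each statement's English description precedes it below -/
import Mathlib

section
/- Let R be an integral domain with quotient field K and M a maximal ideal of R with finite residue field such that R_M is a discrete valuation ring. If (0) ⊊ P₁ ⊊ P₂ is a maximal chain of prime ideals in Int(R_M), then P₁ = fK[X] ∩ Int(R_M) for some irreducible polynomial f ∈ K[X], and the contractions (0) ⊊ fK[X] ∩ (Int(R))_M ⊊ P₂ ∩ (Int(R))_M form a chain of length 2 of primes in (Int(R))_M; in particular dim((Int(R))_M) ≥ 2. -/
/- Preamble: integer-valued polynomials and essential domains. -/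

noncomputable section

open Polynomial

/-- The image in the quotient field `FractionRing R` of the localization `R_p` of `R`
at (the complement of) an ideal `p`, as a subset of `FractionRing R`. -/
def locSet (R : Type*) [CommRing R] [IsDomain R] (p : Ideal R) : Set (FractionRing R) :=
  {x | ∃ a s : R, s ∉ p ∧ x = algebraMap R (FractionRing R) a / algebraMap R (FractionRing R) s}

/-- An integral domain `R` is *essential* if there is a set `Δ` of prime ideals of `R`
such that `R = ⋂_{p ∈ Δ} R_p` (inside the quotient field) and each `R_p` is a valuation
domain (equivalently, for every `x` in the quotient field, `x ∈ R_p` or `x⁻¹ ∈ R_p`). -/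
def IsEssential (R : Type*) [CommRing R] [IsDomain R] : Prop :=
  ∃ Δ : Set (Ideal R),
    (∀ p ∈ Δ, p.IsPrime) ∧
    (∀ p ∈ Δ, ∀ x : FractionRing R, x ∈ locSet R p ∨ x⁻¹ ∈ locSet R p) ∧
    Set.range (algebraMap R (FractionRing R)) = ⋂ p ∈ Δ, locSet R p

/-- An integral domain `R` is *locally essential* if `R_q` is an essential domain for
every prime ideal `q` of `R`. -/
def IsLocallyEssential (R : Type*) [CommRing R] [IsDomain R] : Prop :=
  ∀ (q : Ideal R) (hq : q.IsPrime), IsEssential (Localization (@Ideal.primeCompl R _ q hq))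

/-- The ring `Int(R) = {f ∈ K[X] : f(R) ⊆ R}` of integer-valued polynomials over `R`,
as a subring of `K[X]` where `K` is the quotient field of `R`. -/
def IntPoly (R : Type*) [CommRing R] [IsDomain R] : Subring (Polynomial (FractionRing R)) :=
  ⨅ a : R, Subring.comap (Polynomial.evalRingHom (algebraMap R (FractionRing R) a))
    (algebraMap R (FractionRing R)).range

end

/-!
Write `V = R_M ⊆ K` and `T = Int(V)`. A prime `P` of `T` containing a nonzero constant `a ∈ R`
is maximal: `V` is a DVR, so `M^m V ⊆ aV` for some `m`, and since every `v ∈ V` satisfies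
`v^q ≡ v mod MV` (`q = |R/M|`), the polynomial `(g^q - g)^m / a` lies in `T` for every `g ∈ T`;
thus `T/P` satisfies `x^q = x` and is a field. Hence `P₁`, which is not maximal, avoids the
nonzero constants, and as `K[X]` is the localization of `T` at them, `P₁ = fK[X] ∩ T` for a
prime `f`. For the same reason `P₂` contains a nonzero constant, since otherwise `P₂K[X]` would
be a prime strictly containing the maximal ideal `fK[X]`. Finally `R[X] ⊆ Int(R)_M ⊆ T`, the
second inclusion because `R` is dense in `V` for the `M`-adic topology; contracting to
`Int(R)_M`, the first prime keeps the nonzero multiples of `f` in `R[X]` and the second keeps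
the nonzero constant, which gives the chain.
-/

open Polynomial

section CommRing

variable {A : Type*} [CommRing A]

theorem Ideal.IsPrime.isMaximal_of_forall_pow_sub_self_mem {P : Ideal A} (hP : P.IsPrime)
    {q : ℕ} (hq : 2 ≤ q) (h : ∀ g : A, g ^ q - g ∈ P) : P.IsMaximal := by
  refine ⟨⟨hP.ne_top, fun Q hPQ => ?_⟩⟩
  obtain ⟨g, hgQ, hgP⟩ := SetLike.exists_of_lt hPQ
  have hfac : g ^ q - g = g * (g ^ (q - 1) - 1) := by
    rw [mul_sub, mul_one, ← pow_succ', Nat.sub_add_cancel (by omega)]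
  have hunit : g ^ (q - 1) - 1 ∈ Q :=
    hPQ.le ((hP.mem_or_mem (hfac ▸ h g)).resolve_left hgP)
  have hpow : g ^ (q - 1) ∈ Q := Q.pow_mem_of_mem hgQ _ (by omega)
  exact (Ideal.eq_top_iff_one Q).mpr (by simpa using Q.sub_mem hpow hunit)

theorem two_le_ringKrullDim_of_lt_of_lt {p₀ p₁ p₂ : Ideal A} [p₀.IsPrime] [p₁.IsPrime]
    [p₂.IsPrime] (h₀₁ : p₀ < p₁) (h₁₂ : p₁ < p₂) : 2 ≤ ringKrullDim A := by
  let x₀ : PrimeSpectrum A := ⟨p₀, ‹_›⟩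
  let x₁ : PrimeSpectrum A := ⟨p₁, ‹_›⟩
  let x₂ : PrimeSpectrum A := ⟨p₂, ‹_›⟩
  have h₂ : (2 : ℕ∞) ≤ Order.height x₂ :=
    calc (2 : ℕ∞) ≤ Order.height x₀ + 1 + 1 := by rw [add_assoc]; exact le_add_self
      _ ≤ Order.height x₁ + 1 := by gcongr; exact Order.height_add_one_le h₀₁
      _ ≤ Order.height x₂ := Order.height_add_one_le h₁₂
  exact (WithBot.coe_le_coe.mpr h₂).trans (Order.height_le_krullDim _)

end CommRing

theorem IsDiscreteValuationRing.exists_maximalIdeal_pow_le_span_singleton {A : Type*}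
    [CommRing A] [IsDomain A] [IsDiscreteValuationRing A] {d : A} (hd : d ≠ 0) :
    ∃ m : ℕ, IsLocalRing.maximalIdeal A ^ m ≤ Ideal.span {d} := by
  obtain ⟨ϖ, hϖ⟩ := exists_irreducible A
  obtain ⟨m, hm⟩ := ideal_eq_span_pow_irreducible (s := Ideal.span {d}) (by simpa using hd) hϖ
  refine ⟨m, le_of_eq ?_⟩
  rw [hm, (irreducible_iff_uniformizer ϖ).mp hϖ, Ideal.span_singleton_pow]

section LocalizationAtMaximal

variable {R : Type*} [CommRing R] {Rₚ : Type*} [CommRing Rₚ] [Algebra R Rₚ] [IsLocalRing Rₚ]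

theorem exists_sub_algebraMap_mem_maximalIdeal_pow (p : Ideal R) [p.IsMaximal]
    [IsLocalization.AtPrime Rₚ p] (v : Rₚ) (n : ℕ) :
    ∃ b : R, v - algebraMap R Rₚ b ∈ IsLocalRing.maximalIdeal Rₚ ^ n := by
  obtain ⟨b, hb⟩ := Ideal.Quotient.mk_surjective
    ((IsLocalization.AtPrime.equivQuotMaximalIdealPow p Rₚ n).symm (Ideal.Quotient.mk _ v))
  refine ⟨b, Ideal.Quotient.eq.mp ?_⟩
  rw [← IsLocalization.AtPrime.equivQuotMaximalIdealPow_apply_mk p, hb,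
    AlgEquiv.apply_symm_apply]

theorem pow_card_sub_self_mem_maximalIdeal (p : Ideal R) [p.IsMaximal]
    [IsLocalization.AtPrime Rₚ p] [Finite (R ⧸ p)] (v : Rₚ) :
    v ^ Nat.card (R ⧸ p) - v ∈ IsLocalRing.maximalIdeal Rₚ := by
  let _ := Ideal.Quotient.field p
  let _ := Ideal.Quotient.field (IsLocalRing.maximalIdeal Rₚ)
  let e := IsLocalization.AtPrime.equivQuotMaximalIdeal p Rₚ
  have : Finite (Rₚ ⧸ IsLocalRing.maximalIdeal Rₚ) := Finite.of_equiv _ e.toEquiv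
  let _ := Fintype.ofFinite (Rₚ ⧸ IsLocalRing.maximalIdeal Rₚ)
  rw [← Ideal.Quotient.eq_zero_iff_mem, map_sub, map_pow, Nat.card_congr e.toEquiv,
    Nat.card_eq_fintype_card, FiniteField.pow_card, sub_self]

end LocalizationAtMaximal

section IntValued

variable {R A : Type*} [CommRing R] [CommRing A] [Algebra R A]

noncomputable def intValued (V : Subalgebra R A) : Subring A[X] :=
  ⨅ x : V, V.toSubring.comap (evalRingHom (x : A))

variable {V : Subalgebra R A}

theorem mem_intValued {f : A[X]} : f ∈ intValued V ↔ ∀ x ∈ V, f.eval x ∈ V := by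
  simp [intValued, Subring.mem_iInf]

variable (V)

theorem map_mem_intValued (q : R[X]) : q.map (algebraMap R A) ∈ intValued V := by
  refine mem_intValued.mpr fun x hx => ?_
  rw [eval_map_algebraMap, show x = ((⟨x, hx⟩ : V) : A) from rfl, ← aeval_subalgebra_coe]
  exact SetLike.coe_mem _

theorem Subalgebra.exists_mem_eval_map_sub_eval_map_eq_mul (q : R[X]) {x y : A} (hx : x ∈ V)
    (hy : y ∈ V) :
    ∃ c ∈ V,
      (q.map (algebraMap R A)).eval x - (q.map (algebraMap R A)).eval y = (x - y) * c := by
  obtain ⟨c, hc⟩ := sub_dvd_eval_sub (⟨x, hx⟩ : V) ⟨y, hy⟩ (q.map (algebraMap R V))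
  refine ⟨c, c.2, ?_⟩
  simpa [eval_map_algebraMap, ← aeval_subalgebra_coe] using congrArg V.val hc

end IntValued

theorem map_mem_intPoly {R : Type*} [CommRing R] [IsDomain R] (q : R[X]) :
    q.map (algebraMap R (FractionRing R)) ∈ IntPoly R :=
  Subring.mem_iInf.mpr fun a => ⟨q.eval a, by simp [eval_map, eval₂_at_apply]⟩

noncomputable section PolynomialLocalization

variable {R : Type*} [CommRing R] (T : Subring (FractionRing R)[X])
  (hT : ∀ q : R[X], q.map (algebraMap R (FractionRing R)) ∈ T)

local notation "K" => FractionRing R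

def constHom : R →+* T := ((mapRingHom (algebraMap R K)).codRestrict T hT).comp C

@[simp]
theorem coe_constHom (a : R) : (constHom T hT a : K[X]) = C (algebraMap R K a) :=
  map_C _

def nonzeroConstants : Submonoid T := (nonZeroDivisors R).map (constHom T hT)

theorem isLocalization_nonzeroConstants : IsLocalization (nonzeroConstants T hT) K[X] where
  map_units := by
    rintro ⟨_, a, ha, rfl⟩
    show IsUnit (constHom T hT a : K[X])
    rw [coe_constHom]
    exact isUnit_C.mpr (IsLocalization.map_units K ⟨a, ha⟩)
  surj g := by
    obtain ⟨b, hb, hbg⟩ := IsLocalization.integerNormalization_spec (nonZeroDivisors R) g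
    refine ⟨(⟨_, hT (IsLocalization.integerNormalization (nonZeroDivisors R) g)⟩,
      ⟨constHom T hT b, Submonoid.mem_map_of_mem _ hb⟩), ?_⟩
    show g * (constHom T hT b : K[X]) = (IsLocalization.integerNormalization _ g).map _
    rw [coe_constHom, hbg, Algebra.smul_def, Polynomial.algebraMap_apply, mul_comm]
  exists_of_eq h := ⟨1, by simpa using Subtype.val_injective h⟩

variable {T hT} {P : Ideal T} [P.IsPrime]

theorem isPrime_map_of_disjoint (hdisj : Disjoint (nonzeroConstants T hT : Set T) P) :
    (P.map (algebraMap T K[X])).IsPrime :=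
  have := isLocalization_nonzeroConstants T hT
  IsLocalization.isPrime_of_isPrime_disjoint _ _ P ‹_› hdisj

theorem comap_map_of_disjoint (hdisj : Disjoint (nonzeroConstants T hT : Set T) P) :
    (P.map (algebraMap T K[X])).comap (algebraMap T K[X]) = P :=
  have := isLocalization_nonzeroConstants T hT
  IsLocalization.under_map_of_isPrime_disjoint _ _ ‹_› hdisj

theorem map_ne_bot_of_disjoint (hP : P ≠ ⊥)
    (hdisj : Disjoint (nonzeroConstants T hT : Set T) P) : P.map (algebraMap T K[X]) ≠ ⊥ := by
  intro h
  apply hP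
  rw [← comap_map_of_disjoint hdisj, h]
  exact Ideal.comap_bot_of_injective _ Subtype.val_injective

variable [IsDomain R]

theorem exists_prime_forall_mem_iff_dvd (hP : P ≠ ⊥)
    (hdisj : Disjoint (nonzeroConstants T hT : Set T) P) :
    ∃ f : K[X], Prime f ∧ ∀ g : T, g ∈ P ↔ f ∣ (g : K[X]) := by
  obtain ⟨f, hf⟩ := (IsPrincipalIdealRing.principal (P.map (algebraMap T K[X]))).principal
  replace hf : P.map (algebraMap T K[X]) = Ideal.span {f} := hf
  have hf0 : f ≠ 0 := by
    rintro rfl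
    exact map_ne_bot_of_disjoint hP hdisj (by simpa using hf)
  refine ⟨f, (Ideal.span_singleton_prime hf0).mp (hf ▸ isPrime_map_of_disjoint hdisj),
    fun g => ?_⟩
  rw [← Ideal.mem_span_singleton, ← hf]
  exact (SetLike.ext_iff.mp (comap_map_of_disjoint hdisj) g).symm

theorem not_disjoint_of_lt {P' : Ideal T} [P'.IsPrime] (hP : P ≠ ⊥)
    (hdisj : Disjoint (nonzeroConstants T hT : Set T) P) (h : P < P') :
    ¬Disjoint (nonzeroConstants T hT : Set T) P' := by
  intro hdisj'
  have := isPrime_map_of_disjoint hdisj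
  have hmap : P.map (algebraMap T K[X]) = P'.map (algebraMap T K[X]) :=
    (IsPrime.to_maximal_ideal (map_ne_bot_of_disjoint hP hdisj)).eq_of_le
      (isPrime_map_of_disjoint hdisj').ne_top (Ideal.map_mono h.le)
  apply h.ne
  rw [← comap_map_of_disjoint hdisj, hmap, comap_map_of_disjoint hdisj']

theorem exists_contracted_prime_chain {T' : Subring K[X]}
    (hT' : ∀ q : R[X], q.map (algebraMap R K) ∈ T') (hle : T' ≤ T)
    (hP : ¬Disjoint (nonzeroConstants T hT : Set T) P)
    {f : K[X]} (hf : Prime f) (hfP : ∀ g : T, f ∣ (g : K[X]) → g ∈ P) :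
    ∃ Q₁ Q₂ : Ideal T', Q₁.IsPrime ∧ Q₂.IsPrime ∧ ⊥ < Q₁ ∧ Q₁ < Q₂ ∧
      Subtype.val '' (Q₁ : Set T') = {g | g ∈ T' ∧ f ∣ g} ∧
      Subtype.val '' (Q₂ : Set T') = (T' : Set K[X]) ∩ Subtype.val '' (P : Set T) ∧
      2 ≤ ringKrullDim T' := by
  have : (Ideal.span {f}).IsPrime := (Ideal.span_singleton_prime hf.ne_zero).mpr hf
  let Q₁ := (Ideal.span {f}).comap T'.subtype
  let Q₂ := P.comap (Subring.inclusion hle)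
  have hbot : ⊥ < Q₁ := by
    obtain ⟨b, hb, hbf⟩ := IsLocalization.integerNormalization_spec (nonZeroDivisors R) f
    refine bot_lt_iff_ne_bot.mpr ((Submodule.ne_bot_iff _).mpr
      ⟨⟨_, hT' (IsLocalization.integerNormalization (nonZeroDivisors R) f)⟩, ?_, ?_⟩)
    · refine Ideal.mem_span_singleton.mpr ⟨C (algebraMap R K b), ?_⟩
      rw [Subring.coe_subtype, Subtype.coe_mk, hbf, Algebra.smul_def,
        Polynomial.algebraMap_apply, mul_comm]
    · rw [Ne, ← Subtype.coe_injective.eq_iff]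
      simp [hbf, nonZeroDivisors.ne_zero hb, hf.ne_zero]
  obtain ⟨_, ⟨a, ha, rfl⟩, haP⟩ := Set.not_disjoint_iff.mp hP
  have hlt : Q₁ < Q₂ := by
    refine lt_of_le_of_ne (fun g hg => hfP _ (Ideal.mem_span_singleton.mp hg)) fun h => ?_
    have : constHom T' hT' a ∈ Q₂ := haP
    rw [← h] at this
    refine hf.not_isUnit (isUnit_of_dvd_unit (Ideal.mem_span_singleton.mp this) ?_)
    rw [Subring.coe_subtype, coe_constHom]
    exact isUnit_C.mpr (IsLocalization.map_units K ⟨a, ha⟩)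
  refine ⟨Q₁, Q₂, inferInstance, inferInstance, hbot, hlt, ?_, ?_,
    two_le_ringKrullDim_of_lt_of_lt hbot hlt⟩
  · ext g
    simp [Q₁, Ideal.mem_span_singleton, and_comm]
  · ext g
    simpa [Q₂] using
      ⟨fun ⟨hg, hgP⟩ => ⟨hg, hle hg, hgP⟩, fun ⟨hg, _, hgP⟩ => ⟨hg, hgP⟩⟩

end PolynomialLocalization

noncomputable section LocSubalgebra

variable {R : Type*} [CommRing R] [IsDomain R]

local notation "K" => FractionRing R

abbrev locSubalgebra (M : Ideal R) [M.IsPrime] : Subalgebra R K :=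
  Localization.subalgebra.ofField K M.primeCompl M.primeCompl_le_nonZeroDivisors

variable (M : Ideal R) [M.IsPrime]

theorem coe_locSubalgebra : (locSubalgebra M : Set K) = locSet R M := by
  ext x
  simp [locSet, div_eq_mul_inv, Localization.subalgebra.ofField]

instance : IsLocalization.AtPrime (locSubalgebra M) M :=
  Localization.subalgebra.isLocalization_ofField K _ _

theorem inv_algebraMap_mem_locSubalgebra {s : R} (hs : s ∉ M) :
    (algebraMap R K s)⁻¹ ∈ locSubalgebra M := by
  rw [← SetLike.mem_coe, coe_locSubalgebra]
  exact ⟨1, s, hs, by simp⟩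

theorem isDiscreteValuationRing_locSubalgebra
    (hdvr : IsDiscreteValuationRing (Localization.AtPrime M)) :
    IsDiscreteValuationRing (locSubalgebra M) :=
  IsDiscreteValuationRing.RingEquivClass.isDiscreteValuationRing
    (IsLocalization.algEquiv M.primeCompl (Localization.AtPrime M) (locSubalgebra M))

end LocSubalgebra

section IntValuedLocSubalgebra

variable {R : Type*} [CommRing R] [IsDomain R] {M : Ideal R} [M.IsMaximal]
  [IsDiscreteValuationRing (locSubalgebra M)]

local notation "K" => FractionRing R

theorem exists_forall_mem_maximalIdeal_pow_inv_mul_mem {d : R} (hd : d ≠ 0) :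
    ∃ m : ℕ, ∀ y ∈ IsLocalRing.maximalIdeal (locSubalgebra M) ^ m,
      (algebraMap R K d)⁻¹ * (y : K) ∈ locSubalgebra M := by
  have hd0 : algebraMap R K d ≠ 0 :=
    IsFractionRing.to_map_ne_zero_of_mem_nonZeroDivisors (mem_nonZeroDivisors_of_ne_zero hd)
  have hd' : algebraMap R (locSubalgebra M) d ≠ 0 := by
    rwa [Ne, ← Subalgebra.coe_eq_zero, Subalgebra.coe_algebraMap]
  obtain ⟨m, hm⟩ := IsDiscreteValuationRing.exists_maximalIdeal_pow_le_span_singleton hd'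
  refine ⟨m, fun y hy => ?_⟩
  obtain ⟨w, rfl⟩ := Ideal.mem_span_singleton.mp (hm hy)
  rw [Subalgebra.coe_mul, Subalgebra.coe_algebraMap, inv_mul_cancel_left₀ hd0]
  exact w.2

theorem intPoly_le_intValued : IntPoly R ≤ intValued (locSubalgebra M) := by
  intro h hh
  refine mem_intValued.mpr fun x hx => ?_
  obtain ⟨d, hd, hq⟩ := IsLocalization.integerNormalization_spec (nonZeroDivisors R) h
  have hd0 : algebraMap R K d ≠ 0 := IsFractionRing.to_map_ne_zero_of_mem_nonZeroDivisors hd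
  obtain ⟨m, hm⟩ := exists_forall_mem_maximalIdeal_pow_inv_mul_mem (M := M)
    (nonZeroDivisors.ne_zero hd)
  -- approximate `x` by some `b ∈ R` modulo `d V`, and compare `h(x)` with `h(b) ∈ R`
  obtain ⟨b, hb⟩ :=
    exists_sub_algebraMap_mem_maximalIdeal_pow M (⟨x, hx⟩ : locSubalgebra M) m
  have hw := hm _ hb
  simp only [Subalgebra.coe_sub, Subalgebra.coe_algebraMap] at hw
  obtain ⟨c, hc, hqc⟩ := (locSubalgebra M).exists_mem_eval_map_sub_eval_map_eq_mul
    (IsLocalization.integerNormalization (nonZeroDivisors R) h) hx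
    ((locSubalgebra M).algebraMap_mem b)
  obtain ⟨r, hr⟩ := Subring.mem_iInf.mp hh b
  replace hr : algebraMap R K r = h.eval (algebraMap R K b) := hr
  rw [hq, eval_smul, eval_smul, ← hr, Algebra.smul_def, Algebra.smul_def] at hqc
  have heval : h.eval x =
      algebraMap R K r + (algebraMap R K d)⁻¹ * (x - algebraMap R K b) * c := by
    field_simp
    linear_combination hqc
  rw [heval]
  exact add_mem ((locSubalgebra M).algebraMap_mem r) (mul_mem hw hc)

theorem C_inv_mul_mem_intValued {h : K[X]} (hh : h ∈ IntPoly R) {s : R} (hs : s ∉ M) :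
    C (algebraMap R K s)⁻¹ * h ∈ intValued (locSubalgebra M) := by
  refine mem_intValued.mpr fun x hx => ?_
  rw [eval_mul, eval_C]
  exact (locSubalgebra M).mul_mem (inv_algebraMap_mem_locSubalgebra M hs)
    (mem_intValued.mp (intPoly_le_intValued hh) x hx)

theorem isMaximal_of_not_disjoint_nonzeroConstants [Finite (R ⧸ M)]
    {P : Ideal (intValued (locSubalgebra M))} [P.IsPrime]
    (h : ¬Disjoint (nonzeroConstants _ (map_mem_intValued (locSubalgebra M)) : Set _)
      (P : Set (intValued (locSubalgebra M)))) :
    P.IsMaximal := by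
  obtain ⟨_, ⟨a, ha, rfl⟩, haP⟩ := Set.not_disjoint_iff.mp h
  have : Nontrivial (R ⧸ M) := Ideal.Quotient.nontrivial_iff.mpr ‹M.IsMaximal›.ne_top
  refine ‹P.IsPrime›.isMaximal_of_forall_pow_sub_self_mem (q := Nat.card (R ⧸ M))
    Finite.one_lt_card fun g => ?_
  obtain ⟨m, hm⟩ := exists_forall_mem_maximalIdeal_pow_inv_mul_mem (M := M)
    (nonZeroDivisors.ne_zero ha)
  have ha0 : algebraMap R K a ≠ 0 := IsFractionRing.to_map_ne_zero_of_mem_nonZeroDivisors ha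
  have hG : C (algebraMap R K a)⁻¹ * ((g : K[X]) ^ Nat.card (R ⧸ M) - g) ^ m ∈
      intValued (locSubalgebra M) := by
    refine mem_intValued.mpr fun x hx => ?_
    have hv := mem_intValued.mp g.2 x hx
    simpa using hm _ (Ideal.pow_mem_pow (pow_card_sub_self_mem_maximalIdeal M ⟨_, hv⟩) m)
  have hfac : (g ^ Nat.card (R ⧸ M) - g) ^ m =
      constHom _ (map_mem_intValued (locSubalgebra M)) a * ⟨_, hG⟩ := by
    apply Subtype.ext
    push_cast [coe_constHom]
    rw [← mul_assoc, ← C_mul, mul_inv_cancel₀ ha0, C_1, one_mul]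
  exact ‹P.IsPrime›.mem_of_pow_mem m (hfac ▸ P.mul_mem_right _ haP)

end IntValuedLocSubalgebra

open Polynomial in
theorem exists_irreducible_and_chain_in_locIntPoly_general
    (R : Type*) [CommRing R] [IsDomain R]
    (M : Ideal R) [hM : M.IsMaximal] [hfin : Finite (R ⧸ M)]
    (hdvr : IsDiscreteValuationRing (Localization.AtPrime M))
    (T : Subring (Polynomial (FractionRing R)))
    (hT : (T : Set (Polynomial (FractionRing R))) =
      {f : Polynomial (FractionRing R) | ∀ x ∈ locSet R M, f.eval x ∈ locSet R M})
    (P₁ P₂ : Ideal T) (hP₁ : P₁.IsPrime) (hP₂ : P₂.IsPrime)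
    (h01 : ⊥ < P₁) (h12 : P₁ < P₂) :
    ∃ f : Polynomial (FractionRing R), Irreducible f ∧
      (Subtype.val '' (P₁ : Set T) = {g : Polynomial (FractionRing R) | g ∈ T ∧ f ∣ g}) ∧
      ∀ T' : Subring (Polynomial (FractionRing R)),
        (T' : Set (Polynomial (FractionRing R))) =
          {g : Polynomial (FractionRing R) | ∃ h ∈ IntPoly R, ∃ s : R, s ∉ M ∧
            g = Polynomial.C ((algebraMap R (FractionRing R)) s)⁻¹ * h} →
        ∃ Q₁ Q₂ : Ideal T', Q₁.IsPrime ∧ Q₂.IsPrime ∧ ⊥ < Q₁ ∧ Q₁ < Q₂ ∧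
          Subtype.val '' (Q₁ : Set T') =
            {g : Polynomial (FractionRing R) | g ∈ T' ∧ f ∣ g} ∧
          Subtype.val '' (Q₂ : Set T') =
            (T' : Set (Polynomial (FractionRing R))) ∩ Subtype.val '' (P₂ : Set T) ∧
          2 ≤ ringKrullDim T' := by
  have := isDiscreteValuationRing_locSubalgebra M hdvr
  obtain rfl : T = intValued (locSubalgebra M) := SetLike.coe_injective <| by
    ext g
    simp [hT, mem_intValued, ← coe_locSubalgebra]
  have hRT := map_mem_intValued (locSubalgebra M)
  have hdisj : Disjoint (nonzeroConstants _ hRT : Set (intValued (locSubalgebra M))) P₁ := by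
    by_contra h
    exact h12.ne ((isMaximal_of_not_disjoint_nonzeroConstants h).eq_of_le hP₂.ne_top h12.le)
  obtain ⟨f, hf, hfP₁⟩ := exists_prime_forall_mem_iff_dvd h01.ne' hdisj
  refine ⟨f, hf.irreducible, ?_, fun T' hT' => ?_⟩
  · ext g
    exact ⟨fun ⟨p, hp, hpg⟩ => hpg ▸ ⟨p.2, (hfP₁ p).mp hp⟩,
      fun ⟨hg, hfg⟩ => ⟨⟨g, hg⟩, (hfP₁ _).mpr hfg, rfl⟩⟩
  have hle : T' ≤ intValued (locSubalgebra M) := fun g hg => by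
    rw [← SetLike.mem_coe, hT'] at hg
    obtain ⟨h, hh, s, hs, rfl⟩ := hg
    exact C_inv_mul_mem_intValued hh hs
  have hRT' (q : R[X]) : q.map (algebraMap R (FractionRing R)) ∈ T' := by
    rw [← SetLike.mem_coe, hT']
    exact ⟨_, map_mem_intPoly q, 1, (Ideal.ne_top_iff_one M).mp hM.ne_top, by simp⟩
  exact exists_contracted_prime_chain hRT' hle (not_disjoint_of_lt h01.ne' hdisj h12) hf
    fun g hg => h12.le ((hfP₁ g).mpr hg)

open Polynomial in
/-- Let `R` be an integral domain with quotient field `K` and `M` a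
maximal ideal with finite residue field such that `R_M` is a DVR.  If
`(0) ⊊ P₁ ⊊ P₂` is a maximal chain of primes of `Int(R_M)` (realized as the subring
`T = {f ∈ K[X] : f(R_M) ⊆ R_M}` of `K[X]`), then `P₁ = fK[X] ∩ Int(R_M)` for some
irreducible `f ∈ K[X]`, and the contractions
`(0) ⊊ fK[X] ∩ (Int(R))_M ⊊ P₂ ∩ (Int(R))_M` form a length-two chain of primes of
`(Int(R))_M`; in particular `dim((Int(R))_M) ≥ 2`. -/
theorem exists_irreducible_and_chain_in_locIntPoly
    (R : Type*) [CommRing R] [IsDomain R]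
    (M : Ideal R) [hM : M.IsMaximal] [hfin : Finite (R ⧸ M)]
    (hdvr : IsDiscreteValuationRing (Localization.AtPrime M))
    (T : Subring (Polynomial (FractionRing R)))
    (hT : (T : Set (Polynomial (FractionRing R))) =
      {f : Polynomial (FractionRing R) | ∀ x ∈ locSet R M, f.eval x ∈ locSet R M})
    (P₁ P₂ : Ideal T) (hP₁ : P₁.IsPrime) (hP₂ : P₂.IsPrime)
    (h01 : ⊥ < P₁) (h12 : P₁ < P₂) (hP₂max : P₂.IsMaximal)
    (hsat01 : ∀ Q : Ideal T, Q.IsPrime → ¬(⊥ < Q ∧ Q < P₁))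
    (hsat12 : ∀ Q : Ideal T, Q.IsPrime → ¬(P₁ < Q ∧ Q < P₂)) :
    ∃ f : Polynomial (FractionRing R), Irreducible f ∧
      (Subtype.val '' (P₁ : Set T) = {g : Polynomial (FractionRing R) | g ∈ T ∧ f ∣ g}) ∧
      ∀ T' : Subring (Polynomial (FractionRing R)),
        (T' : Set (Polynomial (FractionRing R))) =
          {g : Polynomial (FractionRing R) | ∃ h ∈ IntPoly R, ∃ s : R, s ∉ M ∧
            g = Polynomial.C ((algebraMap R (FractionRing R)) s)⁻¹ * h} →
        ∃ Q₁ Q₂ : Ideal T', Q₁.IsPrime ∧ Q₂.IsPrime ∧ ⊥ < Q₁ ∧ Q₁ < Q₂ ∧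
          Subtype.val '' (Q₁ : Set T') =
            {g : Polynomial (FractionRing R) | g ∈ T' ∧ f ∣ g} ∧
          Subtype.val '' (Q₂ : Set T') =
            (T' : Set (Polynomial (FractionRing R))) ∩ Subtype.val '' (P₂ : Set T) ∧
          2 ≤ ringKrullDim T' :=
  exists_irreducible_and_chain_in_locIntPoly_general R M (hM := hM) (hfin := hfin) hdvr T hT P₁ P₂
    hP₁ hP₂ h01 h12
end

section
/- In the tower construction, for every n ≥ 2 and every prime ideal q of Dₙ with q ≠ 𝓜ₙ, there exists a unique prime ideal Q of Bₙ with Q ∩ Dₙ = q, and moreover (Dₙ)_q = (Bₙ)_Q. -/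
/- Preamble: the tower construction of Fontana–Kabbaj (Example 3.1).
All rings are realized as subsets/subrings of one ambient field `Amb k0 r`:
the rational function field over `k0` in the indeterminates
`X₁, X₂, …` (indexed by `ℕ`), `Y`, and `Z₁, …, Z_{r-1}`. -/

noncomputable section

open Polynomial

/-- Index type for the indeterminates: `Sum.inl n` is `Xₙ`, `Sum.inr (Sum.inl ())` is `Y`,
and `Sum.inr (Sum.inr i)` is `Z_{i+1}`. -/
abbrev TowerVars (r : ℕ) : Type := ℕ ⊕ (Unit ⊕ Fin (r - 1))

/-- The ambient field: the fraction field of the polynomial ring over `k0` in all the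
indeterminates. -/
abbrev Amb (k0 : Type) [Field k0] (r : ℕ) : Type :=
  FractionRing (MvPolynomial (TowerVars r) k0)

variable (k0 : Type) [Field k0] (r : ℕ)

/-- The indeterminate `Xₙ` as an element of the ambient field. -/
def ambX (n : ℕ) : Amb k0 r :=
  algebraMap (MvPolynomial (TowerVars r) k0) (Amb k0 r) (MvPolynomial.X (Sum.inl n))

/-- The indeterminate `Y` as an element of the ambient field. -/
def ambY : Amb k0 r :=
  algebraMap (MvPolynomial (TowerVars r) k0) (Amb k0 r) (MvPolynomial.X (Sum.inr (Sum.inl ())))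

/-- The indeterminates `Z₁, …, Z_{r-1}` as elements of the ambient field. -/
def ambZ (i : Fin (r - 1)) : Amb k0 r :=
  algebraMap (MvPolynomial (TowerVars r) k0) (Amb k0 r) (MvPolynomial.X (Sum.inr (Sum.inr i)))

/-- The image of the base field `k0` in the ambient field. -/
def baseSet : Set (Amb k0 r) :=
  Set.range fun c : k0 => algebraMap (MvPolynomial (TowerVars r) k0) (Amb k0 r) (MvPolynomial.C c)

/-- `kₙ := k0(X₁, …, Xₙ)` as a subfield of the ambient field. -/
def kfld (n : ℕ) : Subfield (Amb k0 r) :=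
  Subfield.closure (baseSet k0 r ∪ {x | ∃ i, 1 ≤ i ∧ i ≤ n ∧ x = ambX k0 r i})

/-- `Fₙ := kₙ(Z₁, …, Z_{r-1})`. -/
def Ffld (n : ℕ) : Subfield (Amb k0 r) :=
  Subfield.closure (↑(kfld k0 r n) ∪ Set.range (ambZ k0 r))

/-- `Kₙ := Fₙ(Y)`. -/
def Kfld (n : ℕ) : Subfield (Amb k0 r) :=
  Subfield.closure (↑(Ffld k0 r n) ∪ {ambY k0 r})

/-- The polynomial ring `Fₙ[Y]` as a subring of the ambient field. -/
def polyRing (n : ℕ) : Subring (Amb k0 r) :=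
  Subring.closure (↑(Ffld k0 r n) ∪ {ambY k0 r})

/-- `Vₙ := Fₙ[Y]_{(Y)}`, the localization of `Fₙ[Y]` at the prime `(Y)`, as a subset of
the ambient field. -/
def Vset (n : ℕ) : Set (Amb k0 r) :=
  {x | ∃ f ∈ polyRing k0 r n, ∃ g ∈ polyRing k0 r n,
    (¬ ∃ h ∈ polyRing k0 r n, g = ambY k0 r * h) ∧ x = f / g}

/-- `Mₙ := Y·Fₙ[Y]_{(Y)}`, the maximal ideal of `Vₙ`. -/
def Mset (n : ℕ) : Set (Amb k0 r) :=
  {x | ∃ v ∈ Vset k0 r n, x = ambY k0 r * v}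

/-- `Aₙ := kₙ + Mₙ`. -/
def Aset (n : ℕ) : Set (Amb k0 r) :=
  {x | ∃ c ∈ kfld k0 r n, ∃ m ∈ Mset k0 r n, x = c + m}

/-- `k := ⋃ₙ kₙ` as a subset of the ambient field. -/
def kfldU : Set (Amb k0 r) := ⋃ n, (kfld k0 r n : Set (Amb k0 r))

/-- `F := k(Z₁, …, Z_{r-1}) = ⋃ₙ Fₙ`. -/
def FfldU : Subfield (Amb k0 r) :=
  Subfield.closure (kfldU k0 r ∪ Set.range (ambZ k0 r))

/-- `K := F(Y) = ⋃ₙ Kₙ`. -/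
def KfldU : Subfield (Amb k0 r) :=
  Subfield.closure (↑(FfldU k0 r) ∪ {ambY k0 r})

/-- The polynomial ring `F[Y]`. -/
def polyRingU : Subring (Amb k0 r) :=
  Subring.closure (↑(FfldU k0 r) ∪ {ambY k0 r})

/-- `V := F[Y]_{(Y)}`. -/
def VsetU : Set (Amb k0 r) :=
  {x | ∃ f ∈ polyRingU k0 r, ∃ g ∈ polyRingU k0 r,
    (¬ ∃ h ∈ polyRingU k0 r, g = ambY k0 r * h) ∧ x = f / g}

/-- `M := Y·F[Y]_{(Y)} = ⋃ₙ Mₙ`. -/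
def MsetU : Set (Amb k0 r) :=
  {x | ∃ v ∈ VsetU k0 r, x = ambY k0 r * v}

/-- `A := k + M = ⋃ₙ Aₙ`. -/
def AsetU : Set (Amb k0 r) :=
  {x | ∃ c ∈ kfldU k0 r, ∃ m ∈ MsetU k0 r, x = c + m}

/-- `X′ₙ := (1 + Y·Xₙ)/Y`. -/
def ambX' (n : ℕ) : Amb k0 r :=
  (1 + ambY k0 r * ambX k0 r n) / ambY k0 r

/-- `1` belongs to the ideal of `W` generated by the coefficients of `g`, where `W` is a
subring (given as a subset `S`) of the ambient field. -/
def unitContent (S : Set (Amb k0 r)) (g : Polynomial (Amb k0 r)) : Prop :=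
  ∃ (t : Finset ℕ) (u : ℕ → Amb k0 r), (∀ i ∈ t, u i ∈ S) ∧ ∑ i ∈ t, u i * g.coeff i = 1

/-- The Nagata ring `W(T)` of a subring `W ⊆ Amb k0 r` (given as a subset `S`) in the
"variable" `T`: all fractions `f(T)/g(T)` with `f, g ∈ W[T]` and the coefficients of `g`
generating the unit ideal of `W`.  (When `T` is transcendental over `W` this is the usual
Nagata ring.) -/
def nagataSet (S : Set (Amb k0 r)) (T : Amb k0 r) : Set (Amb k0 r) :=
  {x | ∃ f g : Polynomial (Amb k0 r), (∀ i, f.coeff i ∈ S) ∧ (∀ i, g.coeff i ∈ S) ∧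
    unitContent k0 r S g ∧ x = f.eval T / g.eval T}

/-- The valuation overrings of a ring `D` (given as a subset) inside a subfield `L` of the
ambient field: subrings `W` with `D ⊆ W ⊆ L` such that for every `x ∈ L`, `x ∈ W` or
`x⁻¹ ∈ W`. -/
def valOverringsIn (D : Set (Amb k0 r)) (L : Subfield (Amb k0 r)) : Set (Subring (Amb k0 r)) :=
  {W | D ⊆ ↑W ∧ (W : Set (Amb k0 r)) ⊆ (L : Set (Amb k0 r)) ∧ ∀ x ∈ L, x ∈ W ∨ x⁻¹ ∈ W}

/-- The Kronecker function ring `Kr_{L(T)}(D, b) = ⋂ {W(T) : W a valuation overring of `D`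
in `L`}`, realized as a subset of the ambient field. -/
def krSet (D : Set (Amb k0 r)) (L : Subfield (Amb k0 r)) (T : Amb k0 r) : Set (Amb k0 r) :=
  ⋂ W ∈ valOverringsIn k0 r D L, nagataSet k0 r (↑W) T

/-- The tower `Dₙ`: `D₁ := A₁` and `Dₙ := Bₙ ∩ Aₙ` for `n ≥ 2`, where
`Bₙ := Kr_{K_{n-1}(X′ₙ)}(D_{n-1}, b)`.  (The value at `0` is junk, set to `D₁`.) -/
def Dset : ℕ → Set (Amb k0 r)
  | 0 => Aset k0 r 1
  | 1 => Aset k0 r 1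
  | n + 2 => krSet k0 r (Dset (n + 1)) (Kfld k0 r (n + 1)) (ambX' k0 r (n + 2)) ∩ Aset k0 r (n + 2)

/-- `Bₙ := Kr_{K_{n-1}(X′ₙ)}(D_{n-1}, b)` (meaningful for `n ≥ 2`). -/
def Bset (n : ℕ) : Set (Amb k0 r) :=
  krSet k0 r (Dset k0 r (n - 1)) (Kfld k0 r (n - 1)) (ambX' k0 r n)

/-- `𝓜ₙ := Mₙ ∩ Dₙ`. -/
def MMset (n : ℕ) : Set (Amb k0 r) := Mset k0 r n ∩ Dset k0 r n

/-- `D := ⋃__{n ≥ 1} Dₙ`. -/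
def DsetU : Set (Amb k0 r) := ⋃ n, Dset k0 r n

/-- `𝓜 := ⋃_{n ≥ 2} 𝓜ₙ`. -/
def MMsetU : Set (Amb k0 r) := ⋃ n, MMset k0 r (n + 2)

/-- The localization `D_m = {a/b : a, b ∈ D, b ∉ m}` of a subring `D` of the ambient
field (given as a subset) at (the complement of) a subset `m`. -/
def locAt (D m : Set (Amb k0 r)) : Set (Amb k0 r) :=
  {x | ∃ a ∈ D, ∃ b ∈ D, b ∉ m ∧ x = a / b}

/-- The quotient field, inside the ambient field, of a subring given as a subset. -/
def qfSet (D : Set (Amb k0 r)) : Set (Amb k0 r) :=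
  {x | ∃ a ∈ D, ∃ b ∈ D, b ≠ 0 ∧ x = a / b}

/-- The nonunits of a subring of the ambient field, given as a subset: in a local
subring of a field these form the maximal ideal. -/
def nonunitsIn (S : Set (Amb k0 r)) : Set (Amb k0 r) :=
  {x | x ∈ S ∧ (x = 0 ∨ x⁻¹ ∉ S)}

/-- A subring `A` of the ambient field is a pseudo-valuation domain: it is local, and its
maximal ideal (= set of nonunits) is also the maximal ideal of some valuation overring of
`A` in its quotient field. -/
def IsPVDSub (A : Subring (Amb k0 r)) : Prop :=
  IsLocalRing ↥A ∧
  ∃ W : Subring (Amb k0 r), (A : Set (Amb k0 r)) ⊆ ↑W ∧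
    (W : Set (Amb k0 r)) ⊆ qfSet k0 r ↑A ∧
    (∀ x ∈ qfSet k0 r (A : Set (Amb k0 r)), x ∈ W ∨ x⁻¹ ∈ W) ∧
    nonunitsIn k0 r ↑A = nonunitsIn k0 r ↑W

/-- The valuative dimension of a subring of the ambient field: the supremum of the Krull
dimensions of its valuation overrings (in its quotient field). -/
def subValuativeDim (A : Subring (Amb k0 r)) : WithBot ℕ∞ :=
  ⨆ W : {W : Subring (Amb k0 r) // (A : Set (Amb k0 r)) ⊆ ↑W ∧
      (W : Set (Amb k0 r)) ⊆ qfSet k0 r ↑A ∧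
      ∀ x ∈ qfSet k0 r (A : Set (Amb k0 r)), x ∈ W ∨ x⁻¹ ∈ W},
    ringKrullDim ↥(W : Subring (Amb k0 r))

/-- `1` belongs to the ideal generated by the coefficients of a multivariable polynomial
`g` in the subring given by the subset `S`. -/
def mvUnitContent (S : Set (Amb k0 r)) (g : MvPolynomial ℕ (Amb k0 r)) : Prop :=
  ∃ (t : Finset (ℕ →₀ ℕ)) (u : (ℕ →₀ ℕ) → Amb k0 r),
    (∀ m ∈ t, u m ∈ S) ∧ ∑ m ∈ t, u m * MvPolynomial.coeff m g = 1

/-- The Nagata ring `W(T₀, T₁, …)` of a subring `W` of the ambient field (given as a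
subset `S`) in countably many "variables" `T j`: all fractions `f(T)/g(T)` with
`f, g ∈ W[T₀, T₁, …]` and the coefficients of `g` generating the unit ideal of `W`. -/
def nagataSetMv (S : Set (Amb k0 r)) (T : ℕ → Amb k0 r) : Set (Amb k0 r) :=
  {x | ∃ f g : MvPolynomial ℕ (Amb k0 r),
    (∀ m, MvPolynomial.coeff m f ∈ S) ∧ (∀ m, MvPolynomial.coeff m g ∈ S) ∧
    mvUnitContent k0 r S g ∧ x = MvPolynomial.eval T f / MvPolynomial.eval T g}

/-- A subring `S` of the ambient field is an *essential* domain: `S` is the intersection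
of a family of localizations `S_p` at primes `p ∈ Δ`, each of which is a valuation domain
(with quotient field the quotient field of `S`). -/
def IsEssentialSub (S : Subring (Amb k0 r)) : Prop :=
  ∃ Δ : Set (Ideal ↥S),
    (∀ p ∈ Δ, p.IsPrime) ∧
    (∀ p ∈ Δ, ∀ x ∈ qfSet k0 r (S : Set (Amb k0 r)),
      x ∈ locAt k0 r ↑S (Subtype.val '' (p : Set ↥S)) ∨
      x⁻¹ ∈ locAt k0 r ↑S (Subtype.val '' (p : Set ↥S))) ∧
    (S : Set (Amb k0 r)) = ⋂ p ∈ Δ, locAt k0 r ↑S (Subtype.val '' (p : Set ↥S))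

end

/-!
If `q ≠ 𝓜ₙ`, some `s ∈ 𝓜ₙ` lies outside `q`: otherwise `q ⊋ 𝓜ₙ` contains an element of
`Aₙ = kₙ + Mₙ` with nonzero residue `c ∈ kₙ`, and its product with a unit of `Dₙ` of residue
`c⁻¹` would put `1 ∈ q`. Such unit lifts exist by induction on `n`: a rational function of `Xₙ`
over `kₙ₋₁` lifts to a quotient of polynomials in `X'ₙ` over `Dₙ₋₁` that have unit content in
every valuation overring, because `Y X'ₙ - 1 = Y Xₙ`.

Since `Y` is transcendental over `Fₙ`, every element of `Kₙ` lands in `Mₙ = Y Vₙ` after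
multiplication by a power of `Y`, so for `b ∈ Bₙ ⊆ Kₙ` some `sᵏ b` lies in `Bₙ ∩ Mₙ ⊆ Dₙ`.
Thus `Dₙ ⊆ Bₙ ⊆ (Dₙ)_q`, and a ring squeezed between a domain and its localization at a prime
has exactly one prime over it, with the same localization.
-/

open Polynomial

namespace Subring

section PrimeOver

variable {K : Type*} [Field K] {D B : Subring K} {p : Ideal D}

theorem coe_mem_iff_of_image_inter (hDB : D ≤ B) {Q : Ideal B}
    (hQ : Subtype.val '' (Q : Set B) ∩ D = Subtype.val '' (p : Set D)) (d : D) :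
    (⟨d, hDB d.2⟩ : B) ∈ Q ↔ d ∈ p := by
  constructor
  · intro hd
    obtain ⟨a, ha, had⟩ := hQ.subset ⟨⟨_, hd, rfl⟩, d.2⟩
    exact Subtype.val_injective had ▸ ha
  · intro hd
    obtain ⟨⟨β, hβ, hβd⟩, -⟩ := hQ.symm.subset ⟨d, hd, rfl⟩
    exact (Subtype.ext hβd : β = ⟨d, hDB d.2⟩) ▸ hβ

/-- For `B ⊆ D_p`, the trace `p D_p ∩ B` of the maximal ideal of `D_p` on `B`. -/
def primeOver (hp : p.IsPrime) (hB : ∀ b ∈ B, ∃ t : D, t ∉ p ∧ (t : K) * b ∈ D) : Ideal B where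
  carrier := {β | ∃ t : D, t ∉ p ∧ ∃ a ∈ p, (a : K) = t * β}
  zero_mem' := ⟨1, (Ideal.ne_top_iff_one p).1 hp.ne_top, 0, p.zero_mem, by simp⟩
  add_mem' := by
    rintro β₁ β₂ ⟨t₁, ht₁, a₁, ha₁, h₁⟩ ⟨t₂, ht₂, a₂, ha₂, h₂⟩
    refine ⟨t₁ * t₂, fun h => (hp.mem_or_mem h).elim ht₁ ht₂, t₂ * a₁ + t₁ * a₂,
      p.add_mem (p.mul_mem_left _ ha₁) (p.mul_mem_left _ ha₂), ?_⟩
    push_cast [h₁, h₂]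
    ring
  smul_mem' := by
    rintro χ β ⟨t, ht, a, ha, h⟩
    obtain ⟨s, hs, hsχ⟩ := hB χ χ.2
    refine ⟨s * t, fun h => (hp.mem_or_mem h).elim hs ht, ⟨_, hsχ⟩ * a, p.mul_mem_left _ ha, ?_⟩
    simp only [MulMemClass.coe_mul, h, smul_eq_mul]
    ring

variable (hp : p.IsPrime) (hB : ∀ b ∈ B, ∃ t : D, t ∉ p ∧ (t : K) * b ∈ D)

include hp in
theorem mem_primeOver_iff {β : B} {t : D} (ht : t ∉ p) (a : D) (ha : (a : K) = t * β) :
    β ∈ primeOver hp hB ↔ a ∈ p := by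
  refine ⟨fun ⟨t', ht', a', ha', h'⟩ => ?_, fun h => ⟨t, ht, a, h, ha⟩⟩
  have : t' * a = t * a' := Subtype.ext (by push_cast [ha, h']; ring)
  have : t' * a ∈ p := this ▸ p.mul_mem_left t ha'
  exact (hp.mem_or_mem this).resolve_left ht'

theorem primeOver_isPrime : (primeOver hp hB).IsPrime := by
  refine Ideal.isPrime_iff.2 ⟨fun htop => ?_, fun {β₁ β₂} h => ?_⟩
  · obtain ⟨t, ht, a, ha, h⟩ := (Ideal.eq_top_iff_one _).1 htop
    exact ht (Subtype.ext (h.trans (mul_one _)) ▸ ha)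
  · obtain ⟨t₁, ht₁, h₁⟩ := hB β₁ β₁.2
    obtain ⟨t₂, ht₂, h₂⟩ := hB β₂ β₂.2
    rw [mem_primeOver_iff hp hB ht₁ ⟨_, h₁⟩ rfl, mem_primeOver_iff hp hB ht₂ ⟨_, h₂⟩ rfl]
    refine hp.mem_or_mem ((mem_primeOver_iff hp hB (t := t₁ * t₂)
      (fun h => (hp.mem_or_mem h).elim ht₁ ht₂) (⟨_, h₁⟩ * ⟨_, h₂⟩) ?_).1 h)
    push_cast
    ring

theorem image_primeOver_inter (hDB : D ≤ B) :
    Subtype.val '' (primeOver hp hB : Set B) ∩ D = Subtype.val '' (p : Set D) := by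
  have h1 : (1 : D) ∉ p := (Ideal.ne_top_iff_one p).1 hp.ne_top
  ext x
  constructor
  · rintro ⟨⟨β, hβ, rfl⟩, hx⟩
    exact ⟨⟨β, hx⟩, (mem_primeOver_iff hp hB h1 _ (by simp)).1 hβ, rfl⟩
  · rintro ⟨a, ha, rfl⟩
    exact ⟨⟨⟨a, hDB a.2⟩, (mem_primeOver_iff hp hB h1 a (by simp)).2 ha, rfl⟩, a.2⟩

theorem mem_iff_of_image_inter (hDB : D ≤ B) {Q : Ideal B} (hQ : Q.IsPrime)
    (hQp : Subtype.val '' (Q : Set B) ∩ D = Subtype.val '' (p : Set D))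
    {β : B} {t : D} (ht : t ∉ p) (a : D) (ha : (a : K) = t * β) : β ∈ Q ↔ a ∈ p := by
  rw [← coe_mem_iff_of_image_inter hDB hQp] at ht ⊢
  have : (⟨a, hDB a.2⟩ : B) = ⟨t, hDB t.2⟩ * β := Subtype.ext ha
  rw [this, hQ.mul_mem_iff_mem_or_mem, or_iff_right ht]

theorem eq_primeOver (hDB : D ≤ B) {Q : Ideal B} (hQ : Q.IsPrime)
    (hQp : Subtype.val '' (Q : Set B) ∩ D = Subtype.val '' (p : Set D)) :
    Q = primeOver hp hB := by
  ext β
  obtain ⟨t, ht, htβ⟩ := hB β β.2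
  rw [mem_iff_of_image_inter hDB hQ hQp ht ⟨_, htβ⟩ rfl, mem_primeOver_iff hp hB ht ⟨_, htβ⟩ rfl]

theorem localization_eq (hDB : D ≤ B) :
    {x | ∃ a ∈ D, ∃ b ∈ D, b ∉ Subtype.val '' (p : Set D) ∧ x = a / b} =
      {x | ∃ a ∈ B, ∃ b ∈ B, b ∉ Subtype.val '' (primeOver hp hB : Set B) ∧ x = a / b} := by
  have hQp := image_primeOver_inter hp hB hDB
  ext x
  constructor
  · rintro ⟨a, ha, b, hb, hbp, rfl⟩
    exact ⟨a, hDB ha, b, hDB hb, fun h => hbp (hQp ▸ ⟨h, hb⟩), rfl⟩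
  · rintro ⟨a, ha, b, hb, hbQ, rfl⟩
    obtain ⟨s, hs, hsa⟩ := hB a ha
    obtain ⟨t, ht, htb⟩ := hB b hb
    have htb_p : (⟨_, htb⟩ : D) ∉ p := fun h =>
      hbQ ⟨⟨b, hb⟩, (mem_primeOver_iff hp hB ht ⟨_, htb⟩ rfl).2 h, rfl⟩
    have hne : ∀ u : D, u ∉ p → (u : K) ≠ 0 := fun u hu h0 =>
      hu ((Subtype.ext h0 : u = 0) ▸ p.zero_mem)
    refine ⟨(s * a) * t, D.mul_mem hsa t.2, s * (t * b), D.mul_mem s.2 htb, ?_, ?_⟩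
    · rintro ⟨u, hu, hus⟩
      have : u = s * ⟨_, htb⟩ := Subtype.ext hus
      exact (hp.mem_or_mem (this ▸ hu)).elim hs htb_p
    · field_simp [hne s hs, hne t ht]

end PrimeOver

/-- Apply the valuation dichotomy to `(u + y h) / y`: it is not in `W` since `y⁻¹ ∉ W`. -/
theorem inv_add_mul_mem {K : Type*} [Field K] {W : Subring K} {L : Subfield K}
    (hWL : (W : Set K) ⊆ L) (hval : ∀ x ∈ L, x ∈ W ∨ x⁻¹ ∈ W) {u y h : K} (hu : u⁻¹ ∈ W)
    (hu0 : u ≠ 0) (hy : y ∈ W) (hy' : y⁻¹ ∉ W) (hh : h ∈ W) :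
    u + y * h ≠ 0 ∧ (u + y * h)⁻¹ ∈ W := by
  have hy0 : y ≠ 0 := by rintro rfl; exact hy' (by simp)
  obtain ⟨w, hw_def⟩ : ∃ w, w = (u + y * h) / y := ⟨_, rfl⟩
  have hwL : w ∈ L :=
    hw_def ▸ div_mem (add_mem (by simpa using inv_mem (hWL hu)) (mul_mem (hWL hy) (hWL hh)))
      (hWL hy)
  have hw : w ∉ W := fun hw => hy' <| by
    have : y⁻¹ = (w - h) * u⁻¹ := by rw [hw_def]; field_simp; ring
    exact this ▸ mul_mem (sub_mem hw hh) hu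
  have hne : u + y * h ≠ 0 := fun h0 => hw (by simp [hw_def, h0])
  have : (u + y * h)⁻¹ = u⁻¹ * (1 - h * w⁻¹) := by rw [hw_def]; field_simp; ring
  exact ⟨hne, this ▸ mul_mem hu
    (sub_mem (one_mem _) (mul_mem hh ((hval w hwL).resolve_left hw)))⟩

end Subring

namespace Subfield

variable {K : Type*} [Field K] (F : Subfield K) (y : K)

theorem mem_closure_union_singleton_iff {x : K} :
    x ∈ Subring.closure ((F : Set K) ∪ {y}) ↔ ∃ q : F[X], aeval y q = x := by
  have hF : (F : Set K) = Set.range (algebraMap F K) := by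
    ext x; exact ⟨fun h => ⟨⟨x, h⟩, rfl⟩, by rintro ⟨c, rfl⟩; exact c.2⟩
  rw [hF, ← Algebra.adjoin_eq_ring_closure, Subalgebra.mem_toSubring,
    Algebra.adjoin_singleton_eq_range_aeval, AlgHom.mem_range]

/-- The local ring `F[y]_{(y)}`. Requiring `g(y) ≠ 0` besides `g(0) ≠ 0` (automatic for
transcendental `y`) makes it a subring for every `y`. -/
def localizationAtVar : Subring K where
  carrier := {x | ∃ f g : F[X], g.coeff 0 ≠ 0 ∧ aeval y g ≠ 0 ∧ x = aeval y f / aeval y g}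
  mul_mem' := by
    rintro _ _ ⟨f₁, g₁, h₁, h₁', rfl⟩ ⟨f₂, g₂, h₂, h₂', rfl⟩
    exact ⟨f₁ * f₂, g₁ * g₂, by simp [mul_coeff_zero, h₁, h₂], by simp [h₁', h₂'],
      by simp [div_mul_div_comm]⟩
  one_mem' := ⟨1, 1, by simp, by simp, by simp⟩
  add_mem' := by
    rintro _ _ ⟨f₁, g₁, h₁, h₁', rfl⟩ ⟨f₂, g₂, h₂, h₂', rfl⟩
    exact ⟨f₁ * g₂ + f₂ * g₁, g₁ * g₂, by simp [mul_coeff_zero, h₁, h₂], by simp [h₁', h₂'],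
      by rw [div_add_div _ _ h₁' h₂']; simp [mul_comm]⟩
  zero_mem' := ⟨0, 1, by simp, by simp, by simp⟩
  neg_mem' := by
    rintro _ ⟨f, g, h, h', rfl⟩
    exact ⟨-f, g, h, h', by simp [neg_div]⟩

variable {F y}

theorem coe_mem_localizationAtVar (c : F) : (c : K) ∈ localizationAtVar F y :=
  ⟨C c, 1, by simp, by simp, by simp [Subfield.algebraMap_ofSubfield]⟩

theorem self_mem_localizationAtVar : y ∈ localizationAtVar F y :=
  ⟨X, 1, by simp, by simp, by simp⟩

theorem localizationAtVar_mono {F' : Subfield K} (h : F ≤ F') :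
    localizationAtVar F y ≤ localizationAtVar F' y := by
  have hmap : ∀ q : F[X], aeval y (q.map (Subfield.inclusion h)) = aeval y q := fun q => by
    rw [aeval_def, eval₂_map]; rfl
  rintro _ ⟨f, g, hg, hg', rfl⟩
  refine ⟨f.map (Subfield.inclusion h), g.map (Subfield.inclusion h), ?_, by rwa [hmap], by
    rw [hmap, hmap]⟩
  rw [coeff_map]
  exact fun h0 => hg ((Subfield.inclusion h).injective (h0.trans (map_zero _).symm))

theorem exists_eq_aeval_div_aeval {x : K} (hx : x ∈ Subfield.closure ((F : Set K) ∪ {y})) :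
    ∃ f g : F[X], x = aeval y f / aeval y g := by
  obtain ⟨a, ha, b, hb, rfl⟩ := Subfield.mem_closure_iff.1 hx
  obtain ⟨f, rfl⟩ := (mem_closure_union_singleton_iff F y).1 ha
  obtain ⟨g, rfl⟩ := (mem_closure_union_singleton_iff F y).1 hb
  exact ⟨f, g, rfl⟩

theorem localizationAtVar_subset_closure :
    (localizationAtVar F y : Set K) ⊆ Subfield.closure ((F : Set K) ∪ {y}) := by
  rintro _ ⟨f, g, -, -, rfl⟩
  have hmem : ∀ q : F[X], aeval y q ∈ Subfield.closure ((F : Set K) ∪ {y}) := fun q =>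
    Subfield.subring_closure_le _ ((mem_closure_union_singleton_iff F y).2 ⟨q, rfl⟩)
  exact div_mem (hmem f) (hmem g)

/-- Split off the power of `y` dividing the denominator. -/
theorem exists_pow_mul_eq_mul_mem_localizationAtVar {x : K}
    (hx : x ∈ Subfield.closure ((F : Set K) ∪ {y})) :
    ∃ k : ℕ, ∃ v ∈ localizationAtVar F y, y ^ k * x = y * v := by
  obtain ⟨a, ha, b, hb, rfl⟩ := Subfield.mem_closure_iff.1 hx
  obtain ⟨qa, rfl⟩ := (mem_closure_union_singleton_iff F y).1 ha
  obtain ⟨qb, rfl⟩ := (mem_closure_union_singleton_iff F y).1 hb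
  by_cases hb0 : aeval y qb = 0
  · exact ⟨0, 0, Subring.zero_mem _, by simp [hb0]⟩
  have hqb : qb ≠ 0 := by rintro rfl; simp at hb0
  obtain ⟨q, hq, hndvd⟩ := exists_eq_pow_rootMultiplicity_mul_and_not_dvd qb hqb 0
  simp only [map_zero, sub_zero, X_dvd_iff] at hq hndvd
  set j := qb.rootMultiplicity 0
  have hqy : aeval y qb = y ^ j * aeval y q := by rw [hq]; simp
  have hq0 : aeval y q ≠ 0 := fun h => hb0 (by rw [hqy, h, mul_zero])
  refine ⟨j + 1, aeval y qa / aeval y q, ⟨qa, q, hndvd, hq0, rfl⟩, ?_⟩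
  have hy : y ^ j ≠ 0 := fun h => hb0 (by rw [hqy, h, zero_mul])
  rw [hqy]
  field_simp
  ring

variable (hy : Transcendental F y)
include hy

theorem aeval_ne_zero_of_coeff_zero_ne_zero {g : F[X]} (hg : g.coeff 0 ≠ 0) : aeval y g ≠ 0 :=
  fun h => hg (by rw [(transcendental_iff.1 hy) g h, coeff_zero])

theorem mem_localizationAtVar_iff {x : K} :
    x ∈ localizationAtVar F y ↔
      ∃ f g : F[X], g.coeff 0 ≠ 0 ∧ x = aeval y f / aeval y g :=
  ⟨fun ⟨f, g, hg, _, hx⟩ => ⟨f, g, hg, hx⟩,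
    fun ⟨f, g, hg, hx⟩ => ⟨f, g, hg, aeval_ne_zero_of_coeff_zero_ne_zero hy hg, hx⟩⟩

theorem mul_ne_one_of_mem_localizationAtVar {v : K} (hv : v ∈ localizationAtVar F y) :
    y * v ≠ 1 := by
  obtain ⟨f, g, hg, hg', rfl⟩ := hv
  intro h
  have : X * f - g = 0 := transcendental_iff.1 hy _ (by
    rw [map_sub, map_mul, aeval_X, sub_eq_zero]
    field_simp at h
    exact h)
  apply hg
  rw [← sub_eq_zero.1 this, mul_coeff_zero, coeff_X_zero, zero_mul]

theorem exists_inv_one_add_mul_eq {v : K} (hv : v ∈ localizationAtVar F y) :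
    ∃ w ∈ localizationAtVar F y, (1 + y * v)⁻¹ = 1 + y * w := by
  obtain ⟨f, g, hg, hg', rfl⟩ := hv
  have hN : (g + X * f).coeff 0 ≠ 0 := by simpa [mul_coeff_zero] using hg
  have hN' := aeval_ne_zero_of_coeff_zero_ne_zero hy hN
  refine ⟨aeval y (-f) / aeval y (g + X * f), ⟨-f, _, hN, hN', rfl⟩, ?_⟩
  simp only [map_add, map_mul, aeval_X, map_neg] at hN' ⊢
  field_simp
  ring

theorem mem_localizationAtVar_iff_exists_closure {x : K} :
    x ∈ localizationAtVar F y ↔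
      ∃ f ∈ Subring.closure ((F : Set K) ∪ {y}), ∃ g ∈ Subring.closure ((F : Set K) ∪ {y}),
        (¬ ∃ h ∈ Subring.closure ((F : Set K) ∪ {y}), g = y * h) ∧ x = f / g := by
  simp only [mem_closure_union_singleton_iff, mem_localizationAtVar_iff hy]
  constructor
  · rintro ⟨f, g, hg, rfl⟩
    refine ⟨_, ⟨f, rfl⟩, _, ⟨g, rfl⟩, ?_, rfl⟩
    rintro ⟨_, ⟨h, rfl⟩, hgh⟩
    have : g = X * h := sub_eq_zero.1 (transcendental_iff.1 hy _ (by simp [hgh]))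
    exact hg (by rw [this, mul_coeff_zero, coeff_X_zero, zero_mul])
  · rintro ⟨_, ⟨f, rfl⟩, _, ⟨g, rfl⟩, hndvd, rfl⟩
    refine ⟨f, g, fun hg => hndvd ⟨_, ⟨g.divX, rfl⟩, ?_⟩, rfl⟩
    conv_lhs => rw [← X_mul_divX_add g]
    simp [hg]

end Subfield

theorem Transcendental.of_le_toSubfield {k K : Type*} [Field k] [Field K] [Algebra k K]
    {E : IntermediateField k K} {F : Subfield K} (h : F ≤ E.toSubfield) {y : K}
    (hy : Transcendental E y) : Transcendental F y := by
  replace hy : Transcendental E.toSubfield y := hy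
  refine transcendental_iff.2 fun q hq =>
    Polynomial.map_injective _ (Subfield.inclusion h).injective ?_
  rw [Polynomial.map_zero]
  refine transcendental_iff.1 hy _ ?_
  rw [Polynomial.aeval_def, Polynomial.eval₂_map]
  exact hq

theorem Polynomial.eval_mem_of_coeff_mem {R S : Type*} [CommRing R] [SetLike S R]
    [SubringClass S R] {s : S} {p : R[X]} (hp : ∀ i, p.coeff i ∈ s) {x : R} (hx : x ∈ s) :
    p.eval x ∈ s := by
  rw [eval_eq_sum_range]
  exact sum_mem fun i _ => mul_mem (hp i) (pow_mem hx i)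

namespace Tower

section LiftPoly

variable {K : Type*} [Field K]

/-- `∑ⱼ aⱼ ((Y T - 1) / Y)ʲ` with the denominator cleared; the extra factor `T^d` turns `Y^d`
into `(Y T)^d`, which at `T = X'ₙ` is the unit `(1 + Y Xₙ)^d` of residue `1`. -/
noncomputable def liftPoly (Y : K) (a : ℕ → K) (d : ℕ) : K[X] :=
  (∑ j ∈ Finset.range (d + 1), C (a j) * (C Y * X - 1) ^ j * C (Y ^ (d - j))) * X ^ d

variable {Y : K} {a : ℕ → K} {d : ℕ}

theorem eval_liftPoly {T x : K} (h : Y * T = 1 + Y * x) :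
    (liftPoly Y a d).eval T = (1 + Y * x) ^ d * ∑ j ∈ Finset.range (d + 1), a j * x ^ j := by
  have hx : Y * T - 1 = Y * x := by rw [h]; ring
  simp only [liftPoly, eval_mul, eval_finsetSum, eval_pow, eval_sub, eval_C, eval_X, eval_one,
    hx]
  rw [← h, Finset.mul_sum, Finset.sum_mul]
  refine Finset.sum_congr rfl fun j hj => ?_
  have hj : j ≤ d := Nat.lt_succ_iff.1 (Finset.mem_range.1 hj)
  calc a j * (Y * x) ^ j * Y ^ (d - j) * T ^ d
        = a j * x ^ j * (Y ^ j * Y ^ (d - j)) * T ^ d := by ring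
    _ = (Y * T) ^ d * (a j * x ^ j) := by rw [← pow_add, Nat.add_sub_cancel' hj, mul_pow]; ring

theorem coeff_liftPoly_self : (liftPoly Y a d).coeff d =
    (-1) ^ d * a d + Y * ∑ j ∈ Finset.range d, a j * (-1) ^ j * Y ^ (d - 1 - j) := by
  have h := coeff_mul_X_pow
    (∑ j ∈ Finset.range (d + 1), C (a j) * (C Y * X - 1) ^ j * C (Y ^ (d - j))) d 0
  rw [zero_add] at h
  rw [liftPoly, h, coeff_zero_eq_eval_zero]
  simp only [eval_finsetSum, eval_mul, eval_pow, eval_sub, eval_C, eval_X, eval_one, mul_zero,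
    zero_sub]
  rw [Finset.sum_range_succ, Finset.mul_sum, Nat.sub_self, pow_zero, mul_one, add_comm,
    mul_comm ((-1) ^ d)]
  congr 1
  refine Finset.sum_congr rfl fun j hj => ?_
  rw [show d - j = d - 1 - j + 1 by have := Finset.mem_range.1 hj; omega, pow_succ]
  ring

theorem coeff_liftPoly_add_self : (liftPoly Y a d).coeff (d + d) = a d * Y ^ d := by
  rw [liftPoly, coeff_mul_X_pow, finsetSum_coeff, Finset.sum_eq_single d]
  · have h1 : (C Y * X - 1 : K[X]).natDegree ≤ 1 := by compute_degree
    have := coeff_pow_of_natDegree_le (m := d) h1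
    rw [mul_one] at this
    simp [coeff_C_mul, coeff_one, this]
  · intro j hj hjd
    have hj : j < d := lt_of_le_of_ne (Nat.lt_succ_iff.1 (Finset.mem_range.1 hj)) hjd
    refine coeff_eq_zero_of_natDegree_lt (lt_of_le_of_lt ?_ hj)
    compute_degree
  · exact fun h => absurd (Finset.self_mem_range_succ d) h

theorem coeff_liftPoly_mem {W : Subring K} (hY : Y ∈ W) (ha : ∀ j, a j ∈ W) (i : ℕ) :
    (liftPoly Y a d).coeff i ∈ W := by
  have hC : ∀ c ∈ W, C c ∈ liftsRing W.subtype := fun c hc =>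
    (lifts_iff_liftsRing _ _).1 (C_mem_lifts W.subtype ⟨c, hc⟩)
  have hX : X ∈ liftsRing W.subtype := (lifts_iff_liftsRing _ _).1 (X_mem_lifts _)
  have : liftPoly Y a d ∈ liftsRing W.subtype :=
    mul_mem (sum_mem fun j _ => mul_mem (mul_mem (hC _ (ha j))
      (pow_mem (sub_mem (mul_mem (hC _ hY) hX) (one_mem _)) _)) (hC _ (pow_mem hY _)))
      (pow_mem hX _)
  obtain ⟨w, hw⟩ := (lifts_iff_coeff_lifts _).1 ((lifts_iff_liftsRing _ _).2 this) i
  exact hw ▸ w.2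

/-- The unit is the top coefficient `a d Y^d` if `Y` is a unit of `W`, and otherwise the `d`-th
one, `± a d` plus a multiple of `Y`. -/
theorem exists_coeff_liftPoly_inv_mem {W : Subring K} {L : Subfield K} (hWL : (W : Set K) ⊆ L)
    (hval : ∀ x ∈ L, x ∈ W ∨ x⁻¹ ∈ W) (hY : Y ∈ W) (hY0 : Y ≠ 0) (ha : ∀ j, a j ∈ W)
    (had : (a d)⁻¹ ∈ W) (had0 : a d ≠ 0) :
    ∃ i, (liftPoly Y a d).coeff i ≠ 0 ∧ ((liftPoly Y a d).coeff i)⁻¹ ∈ W := by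
  by_cases hYinv : Y⁻¹ ∈ W
  · refine ⟨d + d, ?_⟩
    rw [coeff_liftPoly_add_self, mul_inv, ← inv_pow]
    exact ⟨mul_ne_zero had0 (pow_ne_zero _ hY0), mul_mem had (pow_mem hYinv _)⟩
  · refine ⟨d, coeff_liftPoly_self (a := a) ▸
      Subring.inv_add_mul_mem hWL hval ?_ ?_ hY hYinv ?_⟩
    · rw [mul_inv, ← inv_pow, inv_neg_one]
      exact mul_mem (pow_mem (neg_mem (one_mem _)) _) had
    · exact mul_ne_zero (pow_ne_zero _ (neg_ne_zero.2 one_ne_zero)) had0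
    · exact sum_mem fun j _ => mul_mem (mul_mem (ha j) (pow_mem (neg_mem (one_mem _)) _))
        (pow_mem hY _)

end LiftPoly

noncomputable section

open Subfield

section Transcendence

variable (k0 : Type) [Field k0] (r : ℕ)

def ambVar (v : TowerVars r) : Amb k0 r :=
  algebraMap (MvPolynomial (TowerVars r) k0) (Amb k0 r) (MvPolynomial.X v)

def yFreeField : IntermediateField k0 (Amb k0 r) :=
  IntermediateField.adjoin k0 (ambVar k0 r '' {Sum.inr (Sum.inl ())}ᶜ)

open IntermediateField.algebraAdjoinAdjoin in
theorem transcendental_ambY_yFreeField : Transcendental (yFreeField k0 r) (ambY k0 r) := by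
  have hind : AlgebraicIndependent k0 (ambVar k0 r) :=
    (MvPolynomial.algebraicIndependent_X _ k0).map'
      (f := IsScalarTower.toAlgHom k0 (MvPolynomial (TowerVars r) k0) (Amb k0 r))
      (IsFractionRing.injective _ _)
  exact (hind.transcendental_adjoin (s := {Sum.inr (Sum.inl ())}ᶜ) (by simp)).extendScalars
    (IntermediateField.adjoin k0 (ambVar k0 r '' {Sum.inr (Sum.inl ())}ᶜ))

theorem kfld_le_yFreeField (n : ℕ) : kfld k0 r n ≤ (yFreeField k0 r).toSubfield := by
  rw [kfld, Subfield.closure_le]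
  rintro x (⟨c, rfl⟩ | ⟨i, -, -, rfl⟩)
  · have hc : algebraMap (MvPolynomial (TowerVars r) k0) (Amb k0 r) (MvPolynomial.C c) =
        algebraMap k0 (Amb k0 r) c := (IsScalarTower.algebraMap_apply k0 _ _ c).symm
    simp only [SetLike.mem_coe, hc]
    exact (yFreeField k0 r).algebraMap_mem c
  · exact IntermediateField.subset_adjoin _ _ ⟨Sum.inl i, by simp, rfl⟩

theorem Ffld_le_yFreeField (n : ℕ) : Ffld k0 r n ≤ (yFreeField k0 r).toSubfield := by
  rw [Ffld, Subfield.closure_le]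
  rintro x (hx | ⟨i, rfl⟩)
  · exact kfld_le_yFreeField k0 r n hx
  · exact IntermediateField.subset_adjoin _ _ ⟨Sum.inr (Sum.inr i), by simp, rfl⟩

theorem transcendental_ambY (n : ℕ) : Transcendental (Ffld k0 r n) (ambY k0 r) := by
  have hY := transcendental_ambY_yFreeField k0 r
  exact hY.of_le_toSubfield (Ffld_le_yFreeField k0 r n)

theorem ambY_ne_zero : ambY k0 r ≠ 0 := fun h =>
  transcendental_ambY k0 r 0 (h ▸ isAlgebraic_zero)

end Transcendence

variable {k0 : Type} [Field k0] {r : ℕ} {n : ℕ}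

theorem kfld_mono {m n : ℕ} (h : m ≤ n) : kfld k0 r m ≤ kfld k0 r n := by
  rw [kfld, Subfield.closure_le]
  rintro x (hx | ⟨i, h1, h2, rfl⟩)
  · exact Subfield.subset_closure (Or.inl hx)
  · exact Subfield.subset_closure (Or.inr ⟨i, h1, h2.trans h, rfl⟩)

theorem Ffld_mono {m n : ℕ} (h : m ≤ n) : Ffld k0 r m ≤ Ffld k0 r n :=
  Subfield.closure_mono (Set.union_subset_union_left _ (kfld_mono h))

theorem Kfld_mono {m n : ℕ} (h : m ≤ n) : Kfld k0 r m ≤ Kfld k0 r n :=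
  Subfield.closure_mono (Set.union_subset_union_left _ (Ffld_mono h))

theorem kfld_le_Ffld (n : ℕ) : kfld k0 r n ≤ Ffld k0 r n :=
  fun _ hx => Subfield.subset_closure (Or.inl hx)

theorem kfld_le_Kfld (n : ℕ) : kfld k0 r n ≤ Kfld k0 r n :=
  fun _ hx => Subfield.subset_closure (Or.inl (kfld_le_Ffld n hx))

theorem ambY_mem_Kfld : ambY k0 r ∈ Kfld k0 r n :=
  Subfield.subset_closure (Or.inr rfl)

theorem ambX_mem_kfld {i : ℕ} (h1 : 1 ≤ i) (h2 : i ≤ n) : ambX k0 r i ∈ kfld k0 r n :=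
  Subfield.subset_closure (Or.inr ⟨i, h1, h2, rfl⟩)

theorem kfld_succ_le_closure (n : ℕ) :
    kfld k0 r (n + 1) ≤ Subfield.closure (↑(kfld k0 r n) ∪ {ambX k0 r (n + 1)}) := by
  refine Subfield.closure_le.2 ?_
  rintro x (hx | ⟨i, h1, h2, rfl⟩)
  · exact Subfield.subset_closure (Or.inl (Subfield.subset_closure (Or.inl hx)))
  · rcases Nat.lt_or_ge i (n + 1) with h | h
    · exact Subfield.subset_closure (Or.inl (ambX_mem_kfld h1 (Nat.lt_succ_iff.1 h)))
    · exact Subfield.subset_closure (Or.inr (by rw [le_antisymm h2 h]; rfl))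

theorem ambY_mul_ambX' (n : ℕ) : ambY k0 r * ambX' k0 r n = 1 + ambY k0 r * ambX k0 r n :=
  mul_div_cancel₀ _ (ambY_ne_zero k0 r)

theorem ambX'_mem_Kfld (hn : 1 ≤ n) : ambX' k0 r n ∈ Kfld k0 r n :=
  div_mem (add_mem (one_mem _)
    (mul_mem ambY_mem_Kfld (kfld_le_Kfld n (ambX_mem_kfld hn le_rfl)))) ambY_mem_Kfld

/-! ### `Vₙ = Fₙ[Y]_(Y)` and its maximal ideal `Mₙ = Y Vₙ` -/

theorem Vset_eq (n : ℕ) : Vset k0 r n = localizationAtVar (Ffld k0 r n) (ambY k0 r) :=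
  Set.ext fun _ => (mem_localizationAtVar_iff_exists_closure (transcendental_ambY k0 r n)).symm

theorem mem_Mset_iff {x : Amb k0 r} :
    x ∈ Mset k0 r n ↔ ∃ v ∈ localizationAtVar (Ffld k0 r n) (ambY k0 r), x = ambY k0 r * v := by
  rw [Mset, Vset_eq]; rfl

theorem kfld_subset_Vset {c : Amb k0 r} (hc : c ∈ kfld k0 r n) : c ∈ Vset k0 r n := by
  rw [Vset_eq]
  exact coe_mem_localizationAtVar ⟨c, kfld_le_Ffld n hc⟩

theorem zero_mem_Mset : (0 : Amb k0 r) ∈ Mset k0 r n :=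
  mem_Mset_iff.2 ⟨0, zero_mem _, (mul_zero _).symm⟩

theorem ambY_mem_Mset : ambY k0 r ∈ Mset k0 r n :=
  mem_Mset_iff.2 ⟨1, one_mem _, (mul_one _).symm⟩

theorem add_mem_Mset {x y : Amb k0 r} (hx : x ∈ Mset k0 r n) (hy : y ∈ Mset k0 r n) :
    x + y ∈ Mset k0 r n := by
  obtain ⟨v, hv, rfl⟩ := mem_Mset_iff.1 hx
  obtain ⟨w, hw, rfl⟩ := mem_Mset_iff.1 hy
  exact mem_Mset_iff.2 ⟨v + w, add_mem hv hw, (mul_add _ _ _).symm⟩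

theorem mul_mem_Mset {v x : Amb k0 r} (hv : v ∈ Vset k0 r n) (hx : x ∈ Mset k0 r n) :
    v * x ∈ Mset k0 r n := by
  rw [Vset_eq] at hv
  obtain ⟨w, hw, rfl⟩ := mem_Mset_iff.1 hx
  exact mem_Mset_iff.2 ⟨v * w, mul_mem hv hw, by ring⟩

theorem Mset_subset_Vset {x : Amb k0 r} (hx : x ∈ Mset k0 r n) : x ∈ Vset k0 r n := by
  obtain ⟨v, hv, rfl⟩ := mem_Mset_iff.1 hx
  rw [Vset_eq]
  exact mul_mem self_mem_localizationAtVar hv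

theorem one_not_mem_Mset : (1 : Amb k0 r) ∉ Mset k0 r n := by
  rintro h
  obtain ⟨v, hv, hv1⟩ := mem_Mset_iff.1 h
  exact mul_ne_one_of_mem_localizationAtVar (transcendental_ambY k0 r n) hv hv1.symm

theorem exists_inv_one_add_eq {μ : Amb k0 r} (hμ : μ ∈ Mset k0 r n) :
    ∃ μ' ∈ Mset k0 r n, (1 + μ)⁻¹ = 1 + μ' := by
  obtain ⟨v, hv, rfl⟩ := mem_Mset_iff.1 hμ
  obtain ⟨w, hw, h⟩ := exists_inv_one_add_mul_eq (transcendental_ambY k0 r n) hv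
  exact ⟨_, mem_Mset_iff.2 ⟨w, hw, rfl⟩, h⟩

theorem Mset_mono {m n : ℕ} (h : m ≤ n) : Mset k0 r m ⊆ Mset k0 r n := by
  intro x hx
  obtain ⟨v, hv, rfl⟩ := mem_Mset_iff.1 hx
  exact mem_Mset_iff.2 ⟨v, localizationAtVar_mono (y := ambY k0 r) (Ffld_mono h) hv, rfl⟩

theorem Mset_subset_Kfld {x : Amb k0 r} (hx : x ∈ Mset k0 r n) : x ∈ Kfld k0 r n := by
  obtain ⟨v, hv, rfl⟩ := mem_Mset_iff.1 hx
  exact mul_mem ambY_mem_Kfld (localizationAtVar_subset_closure (F := Ffld k0 r n) hv)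

theorem Mset_subset_Aset {x : Amb k0 r} (hx : x ∈ Mset k0 r n) : x ∈ Aset k0 r n :=
  ⟨0, zero_mem _, x, hx, (zero_add x).symm⟩

theorem Aset_subset_Kfld {x : Amb k0 r} (hx : x ∈ Aset k0 r n) : x ∈ Kfld k0 r n := by
  obtain ⟨c, hc, μ, hμ, rfl⟩ := hx
  exact add_mem (kfld_le_Kfld n hc) (Mset_subset_Kfld hμ)

theorem exists_pow_mul_mem_Mset {x : Amb k0 r} (hx : x ∈ Kfld k0 r n) :
    ∃ k : ℕ, ambY k0 r ^ k * x ∈ Mset k0 r n := by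
  obtain ⟨k, v, hv, h⟩ := exists_pow_mul_eq_mul_mem_localizationAtVar (F := Ffld k0 r n)
    (y := ambY k0 r) hx
  exact ⟨k, mem_Mset_iff.2 ⟨v, hv, h⟩⟩

/-! ### Residues of elements of `Aₙ = kₙ + Mₙ` -/

def HasResidue (n : ℕ) (x c : Amb k0 r) : Prop :=
  c ∈ kfld k0 r n ∧ x - c ∈ Mset k0 r n

theorem hasResidue_self {c : Amb k0 r} (hc : c ∈ kfld k0 r n) : HasResidue n c c :=
  ⟨hc, by rw [sub_self]; exact zero_mem_Mset⟩

theorem exists_hasResidue_of_mem_Aset {x : Amb k0 r} (hx : x ∈ Aset k0 r n) :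
    ∃ c, HasResidue n x c := by
  obtain ⟨c, hc, μ, hμ, rfl⟩ := hx
  exact ⟨c, hc, by rwa [add_sub_cancel_left]⟩

namespace HasResidue

variable {x y c d : Amb k0 r}

theorem mem_Aset (h : HasResidue n x c) : x ∈ Aset k0 r n :=
  ⟨c, h.1, x - c, h.2, by ring⟩

theorem mem_Vset (h : HasResidue n x c) : x ∈ Vset k0 r n := by
  have hc := kfld_subset_Vset h.1
  have hxc := Mset_subset_Vset h.2
  rw [Vset_eq] at hc hxc ⊢
  simpa using add_mem hc hxc

theorem mono {m : ℕ} (h : HasResidue m x c) (hmn : m ≤ n) : HasResidue n x c :=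
  ⟨kfld_mono hmn h.1, Mset_mono hmn h.2⟩

theorem add (hx : HasResidue n x c) (hy : HasResidue n y d) : HasResidue n (x + y) (c + d) :=
  ⟨add_mem hx.1 hy.1, by simpa [add_sub_add_comm] using add_mem_Mset hx.2 hy.2⟩

theorem mul (hx : HasResidue n x c) (hy : HasResidue n y d) : HasResidue n (x * y) (c * d) := by
  refine ⟨mul_mem hx.1 hy.1, ?_⟩
  have : x * y - c * d = x * (y - d) + d * (x - c) := by ring
  rw [this]
  exact add_mem_Mset (mul_mem_Mset hx.mem_Vset hy.2) (mul_mem_Mset (kfld_subset_Vset hy.1) hx.2)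

theorem pow (h : HasResidue n x c) (k : ℕ) : HasResidue n (x ^ k) (c ^ k) := by
  induction k with
  | zero => simpa using hasResidue_self (one_mem _)
  | succ k ih => simpa [pow_succ] using ih.mul h

theorem sum {ι : Type*} (s : Finset ι) {f g : ι → Amb k0 r}
    (h : ∀ i ∈ s, HasResidue n (f i) (g i)) : HasResidue n (∑ i ∈ s, f i) (∑ i ∈ s, g i) := by
  classical
  induction s using Finset.induction_on with
  | empty => simpa using hasResidue_self (zero_mem _)
  | insert i s hi ih =>
    rw [Finset.sum_insert hi, Finset.sum_insert hi]
    exact (h i (Finset.mem_insert_self i s)).add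
      (ih fun j hj => h j (Finset.mem_insert_of_mem hj))

theorem ne_zero (h : HasResidue n x c) (hc : c ≠ 0) : x ≠ 0 := by
  rintro rfl
  apply one_not_mem_Mset (k0 := k0) (r := r) (n := n)
  have : (1 : Amb k0 r) = -c⁻¹ * (0 - c) := by field_simp; ring
  rw [this]
  exact mul_mem_Mset (kfld_subset_Vset (neg_mem (inv_mem h.1))) h.2

/-- `x = c (1 + μ)` with `μ ∈ Mₙ`, and `1 + Mₙ` is closed under inversion. -/
theorem inv (h : HasResidue n x c) (hc : c ≠ 0) : HasResidue n x⁻¹ c⁻¹ := by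
  have hμ : c⁻¹ * (x - c) ∈ Mset k0 r n := mul_mem_Mset (kfld_subset_Vset (inv_mem h.1)) h.2
  obtain ⟨μ', hμ', hinv⟩ := exists_inv_one_add_eq hμ
  have hx : x = c * (1 + c⁻¹ * (x - c)) := by field_simp; ring
  refine ⟨inv_mem h.1, ?_⟩
  rw [hx, mul_inv, hinv, show c⁻¹ * (1 + μ') - c⁻¹ = c⁻¹ * μ' by ring]
  exact mul_mem_Mset (kfld_subset_Vset (inv_mem h.1)) hμ'

end HasResidue

/-! ### The rings `Dₙ` and `Bₙ` -/

theorem Dset_eq (hn : 2 ≤ n) : Dset k0 r n = Bset k0 r n ∩ Aset k0 r n := by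
  obtain ⟨m, rfl⟩ := Nat.exists_eq_add_of_le' hn
  rfl

theorem Dset_subset_Aset (hn : 1 ≤ n) : Dset k0 r n ⊆ Aset k0 r n := by
  rcases Nat.lt_or_ge n 2 with h | h
  · obtain rfl : n = 1 := by omega
    exact subset_rfl
  · rw [Dset_eq h]
    exact Set.inter_subset_right

theorem Dset_subset_Bset (hn : 2 ≤ n) : Dset k0 r n ⊆ Bset k0 r n := by
  rw [Dset_eq hn]
  exact Set.inter_subset_left

theorem subset_nagataSet (W : Subring (Amb k0 r)) (T : Amb k0 r) :
    (W : Set (Amb k0 r)) ⊆ nagataSet k0 r W T := fun x hx =>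
  ⟨C x, 1, fun i => by rw [coeff_C]; split_ifs <;> simp [hx],
    fun i => by rw [coeff_one]; split_ifs <;> simp, ⟨{0}, fun _ => 1, by simp, by simp⟩,
    by simp⟩

theorem Dset_subset_Bset_succ : Dset k0 r n ⊆ Bset k0 r (n + 1) := fun _ hx =>
  Set.mem_iInter₂.2 fun W hW => subset_nagataSet W _ (hW.1 hx)

theorem ambY_mem_Dset (hn : 1 ≤ n) : ambY k0 r ∈ Dset k0 r n := by
  induction n, hn using Nat.le_induction with
  | base => exact Mset_subset_Aset ambY_mem_Mset
  | succ m hm ih =>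
    rw [Dset_eq (by omega)]
    exact ⟨Dset_subset_Bset_succ ih, Mset_subset_Aset ambY_mem_Mset⟩

theorem zero_mem_Dset (hn : 1 ≤ n) : (0 : Amb k0 r) ∈ Dset k0 r n := by
  rcases Nat.lt_or_ge n 2 with h | h
  · obtain rfl : n = 1 := by omega
    exact Mset_subset_Aset zero_mem_Mset
  · rw [Dset_eq h]
    exact ⟨Set.mem_iInter₂.2 fun W _ => subset_nagataSet W _ W.zero_mem,
      Mset_subset_Aset zero_mem_Mset⟩

theorem Kfld_mem_valOverringsIn (hn : 1 ≤ n) :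
    (Kfld k0 r n).toSubring ∈ valOverringsIn k0 r (Dset k0 r n) (Kfld k0 r n) :=
  ⟨fun _ hx => Aset_subset_Kfld (Dset_subset_Aset hn hx), subset_rfl, fun _ hx => Or.inl hx⟩

theorem Bset_succ_subset_Kfld (hn : 1 ≤ n) : Bset k0 r (n + 1) ⊆ Kfld k0 r (n + 1) := by
  intro b hb
  obtain ⟨f, g, hf, hg, -, rfl⟩ := Set.mem_iInter₂.1 hb _ (Kfld_mem_valOverringsIn hn)
  have hle := Kfld_mono (k0 := k0) (r := r) (Nat.le_succ n)
  have hT := ambX'_mem_Kfld (k0 := k0) (r := r) (Nat.le_succ_of_le hn)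
  exact div_mem (eval_mem_of_coeff_mem (fun i => hle (hf i)) hT)
    (eval_mem_of_coeff_mem (fun i => hle (hg i)) hT)

/-! ### Unit lifts -/

theorem unitContent_of_coeff_inv_mem {S : Set (Amb k0 r)} {g : (Amb k0 r)[X]} {i : ℕ}
    (hi : g.coeff i ≠ 0) (hinv : (g.coeff i)⁻¹ ∈ S) : unitContent k0 r S g :=
  ⟨{i}, fun _ => (g.coeff i)⁻¹, by simpa using hinv, by simp [inv_mul_cancel₀ hi]⟩

/-- An admissible denominator in every Nagata ring `W(X'ₙ₊₁)` whose intersection is `Bₙ₊₁`. -/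
def IsNagataDen (n : ℕ) (g : (Amb k0 r)[X]) : Prop :=
  ∀ W ∈ valOverringsIn k0 r (Dset k0 r n) (Kfld k0 r n),
    (∀ i, g.coeff i ∈ W) ∧ unitContent k0 r W g

theorem div_eval_mem_Bset_succ {f g : (Amb k0 r)[X]}
    (hf : ∀ W ∈ valOverringsIn k0 r (Dset k0 r n) (Kfld k0 r n), ∀ i, f.coeff i ∈ W)
    (hg : IsNagataDen n g) :
    f.eval (ambX' k0 r (n + 1)) / g.eval (ambX' k0 r (n + 1)) ∈ Bset k0 r (n + 1) :=
  Set.mem_iInter₂.2 fun W hW => ⟨f, g, hf W hW, (hg W hW).1, (hg W hW).2, rfl⟩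

/-- `g` is `liftPoly` applied to unit lifts of the coefficients of `p`. -/
theorem exists_isNagataDen_hasResidue {m : ℕ} (hm : 1 ≤ m)
    (ih : ∀ c ∈ kfld k0 r m, c ≠ 0 → ∃ e ∈ Dset k0 r m, e⁻¹ ∈ Dset k0 r m ∧ HasResidue m e c)
    {p : (kfld k0 r m)[X]} (hp : p ≠ 0) :
    ∃ g : (Amb k0 r)[X], IsNagataDen m g ∧
      HasResidue (m + 1) (g.eval (ambX' k0 r (m + 1))) (aeval (ambX k0 r (m + 1)) p) := by
  have hlift : ∀ j, ∃ e ∈ Dset k0 r m, HasResidue m e (p.coeff j) ∧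
      ((p.coeff j : Amb k0 r) ≠ 0 → e⁻¹ ∈ Dset k0 r m) := by
    intro j
    by_cases h0 : (p.coeff j : Amb k0 r) = 0
    · exact ⟨0, zero_mem_Dset hm, by rw [h0]; exact hasResidue_self (zero_mem _),
        fun h => absurd h0 h⟩
    · obtain ⟨e, he, he', hres⟩ := ih _ (p.coeff j).2 h0
      exact ⟨e, he, hres, fun _ => he'⟩
  choose a ha hres hinv using hlift
  set d := p.natDegree
  have hd : (p.coeff d : Amb k0 r) ≠ 0 := fun h => leadingCoeff_ne_zero.2 hp (Subtype.ext h)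
  refine ⟨liftPoly (ambY k0 r) a d, fun W hW => ?_, ?_⟩
  · have hY := hW.1 (ambY_mem_Dset hm)
    obtain ⟨i, hi, hi'⟩ := exists_coeff_liftPoly_inv_mem hW.2.1 hW.2.2 hY (ambY_ne_zero k0 r)
      (fun j => hW.1 (ha j)) (hW.1 (hinv d hd)) ((hres d).ne_zero hd)
    exact ⟨coeff_liftPoly_mem hY fun j => hW.1 (ha j), unitContent_of_coeff_inv_mem hi hi'⟩
  · have hX : ambX k0 r (m + 1) ∈ kfld k0 r (m + 1) := ambX_mem_kfld (by omega) le_rfl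
    have hU : HasResidue (m + 1) (1 + ambY k0 r * ambX k0 r (m + 1)) 1 := ⟨one_mem _, by
      simpa [mul_comm] using mul_mem_Mset (kfld_subset_Vset hX) ambY_mem_Mset⟩
    rw [eval_liftPoly (ambY_mul_ambX' _)]
    convert (hU.pow d).mul (HasResidue.sum _ fun j _ =>
      ((hres j).mono (Nat.le_succ m)).mul ((hasResidue_self hX).pow j)) using 1
    simp [aeval_eq_sum_range, Algebra.smul_def, Subfield.algebraMap_ofSubfield, d]

theorem exists_unit_hasResidue (hn : 1 ≤ n) {c : Amb k0 r} (hc : c ∈ kfld k0 r n)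
    (hc0 : c ≠ 0) :
    ∃ e ∈ Dset k0 r n, e⁻¹ ∈ Dset k0 r n ∧ HasResidue n e c := by
  induction n, hn using Nat.le_induction generalizing c with
  | base => exact ⟨c, (hasResidue_self hc).mem_Aset, (hasResidue_self (inv_mem hc)).mem_Aset,
      hasResidue_self hc⟩
  | succ m hm ih =>
    obtain ⟨pN, pD, rfl⟩ := exists_eq_aeval_div_aeval (F := kfld k0 r m)
      (y := ambX k0 r (m + 1)) (kfld_succ_le_closure m hc)
    have hN : aeval (ambX k0 r (m + 1)) pN ≠ 0 := fun h => hc0 (by rw [h, zero_div])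
    have hD : aeval (ambX k0 r (m + 1)) pD ≠ 0 := fun h => hc0 (by rw [h, div_zero])
    obtain ⟨gN, hgN, hresN⟩ := exists_isNagataDen_hasResidue hm (fun c hc hc0 => ih hc hc0)
      (p := pN) (by rintro rfl; simp at hN)
    obtain ⟨gD, hgD, hresD⟩ := exists_isNagataDen_hasResidue hm (fun c hc hc0 => ih hc hc0)
      (p := pD) (by rintro rfl; simp at hD)
    have hres := hresN.mul (hresD.inv hD)
    rw [← div_eq_mul_inv, ← div_eq_mul_inv] at hres
    rw [Dset_eq (by omega)]
    refine ⟨_, ⟨div_eval_mem_Bset_succ (fun W hW => (hgN W hW).1) hgD, hres.mem_Aset⟩,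
      ⟨?_, (hres.inv hc0).mem_Aset⟩, hres⟩
    rw [inv_div]
    exact div_eval_mem_Bset_succ (fun W hW => (hgD W hW).1) hgN

/-! ### Primes of `Dₙ` other than `𝓜ₙ` -/

theorem exists_mem_Mset_not_mem (hn : 1 ≤ n) {D : Subring (Amb k0 r)}
    (hD : (D : Set (Amb k0 r)) = Dset k0 r n) {q : Ideal D} (hq : q.IsPrime)
    (hqM : Subtype.val '' (q : Set D) ≠ MMset k0 r n) :
    ∃ s : D, (s : Amb k0 r) ∈ Mset k0 r n ∧ s ∉ q := by
  by_contra! hMq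
  have hsub : ¬ Subtype.val '' (q : Set D) ⊆ MMset k0 r n := fun h =>
    hqM (h.antisymm fun x ⟨hxM, hxD⟩ => ⟨⟨x, SetLike.mem_coe.1 (hD ▸ hxD)⟩,
      hMq ⟨x, SetLike.mem_coe.1 (hD ▸ hxD)⟩ hxM, rfl⟩)
  obtain ⟨_, ⟨x, hxq, rfl⟩, hxM⟩ := Set.not_subset.1 hsub
  have hxD : (x : Amb k0 r) ∈ Dset k0 r n := hD ▸ SetLike.mem_coe.2 x.2
  obtain ⟨c, hres⟩ := exists_hasResidue_of_mem_Aset (Dset_subset_Aset hn hxD)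
  have hc0 : c ≠ 0 := by
    rintro rfl
    exact hxM ⟨by simpa using hres.2, hxD⟩
  obtain ⟨w, hwD, -, hw⟩ := exists_unit_hasResidue hn (inv_mem hres.1) (inv_ne_zero hc0)
  let w' : D := ⟨w, SetLike.mem_coe.1 (hD ▸ hwD)⟩
  have h1 : x * w' - 1 ∈ q := hMq _ (by simpa [mul_inv_cancel₀ hc0] using (hres.mul hw).2)
  exact hq.ne_top ((Ideal.eq_top_iff_one _).2
    (by simpa using sub_mem (q.mul_mem_right w' hxq) h1))

theorem exists_pow_mul_mem_Dset (hn : 2 ≤ n) {B : Subring (Amb k0 r)}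
    (hB : (B : Set (Amb k0 r)) = Bset k0 r n) {s : Amb k0 r} (hsM : s ∈ Mset k0 r n)
    (hsD : s ∈ Dset k0 r n) {b : Amb k0 r} (hb : b ∈ B) : ∃ k : ℕ, s ^ k * b ∈ Dset k0 r n := by
  obtain ⟨m, rfl⟩ := Nat.exists_eq_add_of_le' hn
  obtain ⟨k, hk⟩ := exists_pow_mul_mem_Mset
    (Bset_succ_subset_Kfld (n := m + 1) (by omega) (hB ▸ SetLike.mem_coe.2 hb))
  obtain ⟨v, hv, rfl⟩ := mem_Mset_iff.1 hsM
  have hsB : ambY k0 r * v ∈ B := SetLike.mem_coe.1 (hB ▸ Dset_subset_Bset hn hsD)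
  refine ⟨k, ?_⟩
  rw [Dset_eq hn]
  refine ⟨hB ▸ SetLike.mem_coe.2 (mul_mem (pow_mem hsB k) hb), Mset_subset_Aset ?_⟩
  rw [mul_pow, mul_comm (ambY k0 r ^ k), mul_assoc]
  exact mul_mem_Mset (by rw [Vset_eq]; exact pow_mem hv k) hk

end

end Tower

open Tower Subring in
theorem tower_unique_prime_of_B_over_D_general
    (k0 : Type) [Field k0] (r : ℕ) (n : ℕ) (hn : 2 ≤ n) :
    ∀ D' B' : Subring (Amb k0 r),
      (D' : Set (Amb k0 r)) = Dset k0 r n → (B' : Set (Amb k0 r)) = Bset k0 r n →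
      ∀ q : Ideal ↥D', q.IsPrime → Subtype.val '' (q : Set ↥D') ≠ MMset k0 r n →
        ∃ Q : Ideal ↥B', Q.IsPrime ∧
          Subtype.val '' (Q : Set ↥B') ∩ Dset k0 r n = Subtype.val '' (q : Set ↥D') ∧
          (∀ Q' : Ideal ↥B', Q'.IsPrime →
            Subtype.val '' (Q' : Set ↥B') ∩ Dset k0 r n = Subtype.val '' (q : Set ↥D') →
            Q' = Q) ∧
          locAt k0 r (Dset k0 r n) (Subtype.val '' (q : Set ↥D')) =
            locAt k0 r (Bset k0 r n) (Subtype.val '' (Q : Set ↥B')) := by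
  intro D' B' hD' hB' q hq hqM
  rw [← hD', ← hB']
  have hDB : D' ≤ B' := fun x hx => by
    rw [← SetLike.mem_coe, hB']
    exact Dset_subset_Bset hn (hD' ▸ SetLike.mem_coe.2 hx)
  obtain ⟨s, hsM, hsq⟩ := exists_mem_Mset_not_mem (by omega) hD' hq hqM
  have hloc : ∀ b ∈ B', ∃ t : D', t ∉ q ∧ (t : Amb k0 r) * b ∈ D' := fun b hb => by
    obtain ⟨k, hk⟩ := exists_pow_mul_mem_Dset hn hB' hsM (hD' ▸ SetLike.mem_coe.2 s.2) hb
    refine ⟨s ^ k, fun h => hsq (hq.mem_of_pow_mem k h), ?_⟩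
    rw [← SetLike.mem_coe, hD']
    simpa using hk
  exact ⟨primeOver hq hloc, primeOver_isPrime hq hloc, image_primeOver_inter hq hloc hDB,
    fun Q' hQ' hQ'q => eq_primeOver hq hloc hDB hQ' hQ'q, localization_eq hq hloc hDB⟩

/-- In the tower construction, for every `n ≥ 2` and every prime ideal
`q` of `Dₙ` with `q ≠ 𝓜ₙ`, there is a unique prime ideal `Q` of `Bₙ` with
`Q ∩ Dₙ = q`, and moreover `(Dₙ)_q = (Bₙ)_Q`. -/
theorem tower_unique_prime_of_B_over_D
    (k0 : Type) [Field k0] (r : ℕ) (hr : 2 ≤ r) (n : ℕ) (hn : 2 ≤ n) :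
    ∀ D' B' : Subring (Amb k0 r),
      (D' : Set (Amb k0 r)) = Dset k0 r n → (B' : Set (Amb k0 r)) = Bset k0 r n →
      ∀ q : Ideal ↥D', q.IsPrime → Subtype.val '' (q : Set ↥D') ≠ MMset k0 r n →
        ∃ Q : Ideal ↥B', Q.IsPrime ∧
          Subtype.val '' (Q : Set ↥B') ∩ Dset k0 r n = Subtype.val '' (q : Set ↥D') ∧
          (∀ Q' : Ideal ↥B', Q'.IsPrime →
            Subtype.val '' (Q' : Set ↥B') ∩ Dset k0 r n = Subtype.val '' (q : Set ↥D') →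
            Q' = Q) ∧
          locAt k0 r (Dset k0 r n) (Subtype.val '' (q : Set ↥D')) =
            locAt k0 r (Bset k0 r n) (Subtype.val '' (Q : Set ↥B')) :=
  tower_unique_prime_of_B_over_D_general k0 r n hn
end
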